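/- arXiv:1109.1006 — 4 statements merged into one kernel-verified Lean document; each statement's English description precedes it below -/
import Mathlib

section
/- (Operator form of the interpolation condition, case q = 1.) Let 1 < p₁, p₂ < ∞ with pⱼ' = pⱼ/(pⱼ−1), let 0 < θ < 1, and define r and s by 1/r = θ/p₂' and 1 − 1/s = (1−θ)/p₁'. For a measurable f : Ω₁ × Ω₂ → ℝ, the following are equivalent, with the two quantities below equivalent up to constants depending only on p₁, p₂, θ: (a) M(f) := sup over measurable sets E₁ ⊆ Ω₁, E₂ ⊆ Ω₂ of finite positive measure of (∫_{E₁×E₂} |f| d(μ₁×μ₂)) · μ₁(E₁)^{−(1−θ)/p₁'} · μ₂(E₂)^{−θ/p₂'} is finite; (b) the positive kernel operator T_{|f|}g(x) := ∫ |f(x,y)| g(y) dμ₂(y) is bounded from L_{r,1}(μ₂) to L_{s,∞}(μ₁), i.e. there is C < ∞ such that for every measurable g : Ω₂ → ℝ, sup_{c>0} c · μ₁({x : |T_{|f|}g(x)| > c})^{1/s} ≤ C · ∫₀^∞ μ₂({y : |g(y)| > c})^{1/r} dc. -/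
open MeasureTheory ENNReal NNReal

/-- The quantity `M(f)`: supremum over measurable sets `E₁, E₂` of finite positive measure of
`(∫_{E₁×E₂} |f|) · μ₁(E₁)^{-(1-θ)/p₁'} · μ₂(E₂)^{-θ/p₂'}`. -/
noncomputable def Mfunc {Ω₁ Ω₂ : Type*} [MeasurableSpace Ω₁] [MeasurableSpace Ω₂]
    (μ₁ : Measure Ω₁) (μ₂ : Measure Ω₂) (p₁' p₂' θ : ℝ) (f : Ω₁ × Ω₂ → ℝ) : ℝ≥0∞ :=
  ⨆ (E₁ : Set Ω₁) (E₂ : Set Ω₂) (_ : MeasurableSet E₁) (_ : MeasurableSet E₂)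
    (_ : 0 < μ₁ E₁) (_ : μ₁ E₁ < ∞) (_ : 0 < μ₂ E₂) (_ : μ₂ E₂ < ∞),
    (∫⁻ x in E₁ ×ˢ E₂, ‖f x‖₊ ∂(μ₁.prod μ₂)) *
      μ₁ E₁ ^ (-(1 - θ) / p₁') * μ₂ E₂ ^ (-θ / p₂')

/-- The Lorentz `L_{r,1}` norm `[g]_{r,1} = ∫₀^∞ μ({|g| > c})^{1/r} dc`. -/
noncomputable def lorentzNorm {Ω : Type*} [MeasurableSpace Ω]
    (μ : Measure Ω) (r : ℝ) (g : Ω → ℝ) : ℝ≥0∞ :=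
  ∫⁻ c in Set.Ioi (0 : ℝ), μ {y | c < |g y|} ^ (1 / r)

/-- The weak `L_s` quasi-norm of an `ℝ≥0∞`-valued function:
`sup_{c>0} c · μ({h > c})^{1/s}`. -/
noncomputable def weakNormE {Ω : Type*} [MeasurableSpace Ω]
    (μ : Measure Ω) (s : ℝ) (h : Ω → ℝ≥0∞) : ℝ≥0∞ :=
  ⨆ c : ℝ≥0, (c : ℝ≥0∞) * μ {x | (c : ℝ≥0∞) < h x} ^ (1 / s)

/-- The positive kernel operator `T_{|f|}` applied to `|g|`:
`x ↦ ∫ |f(x,y)| |g(y)| dμ₂(y)`. -/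
noncomputable def kernelOp {Ω₁ Ω₂ : Type*} [MeasurableSpace Ω₁] [MeasurableSpace Ω₂]
    (μ₂ : Measure Ω₂) (f : Ω₁ × Ω₂ → ℝ) (g : Ω₂ → ℝ) (x : Ω₁) : ℝ≥0∞ :=
  ∫⁻ y, (‖f (x, y)‖₊ : ℝ≥0∞) * ‖g y‖₊ ∂μ₂

/-!
Both estimates are tested on rectangles. Upper bound: the layer-cake formula for `|g|` writes
`∫_A T_{|f|} g dμ₁` as `∫₀^∞ ∫_{A × {|g| > t}} |f| dt`; bounding each rectangle by
`M(f) μ₁(A)^{1-1/s} μ₂({|g| > t})^{1/r}` gives `∫_A T_{|f|} g ≤ M(f) μ₁(A)^{1-1/s} [g]_{r,1}`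
for every `A`, and such a bound on all sets of finite measure is weak type `s` with the same
constant. Lower bound: the normalised indicator `μ₂(E₂)^{-1/r} 1_{E₂}` has Lorentz norm `1`, and
Kolmogorov's inequality `∫_E h ≤ s/(s-1) ‖h‖_{s,∞} μ(E)^{1-1/s}` applied on `E₁` to its image
recovers the term of `M(f)` at `E₁ × E₂`. Hence `c = (s-1)/s` and `C = 1`.
-/

open Set

lemma ENNReal.mul_rpow_one_div_le_iff {s : ℝ} {c x B : ℝ≥0∞} (hc₀ : c ≠ 0) (hc : c ≠ ∞)
    (hs : 0 < s) :
    c * x ^ (1 / s) ≤ B ↔ x ≤ (B / c) ^ s := by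
  rw [mul_comm, ← ENNReal.le_div_iff_mul_le (.inl hc₀) (.inl hc), one_div,
    ENNReal.rpow_inv_le_iff hs]

lemma ENNReal.mul_rpow_one_div_le_of_mul_le {s : ℝ} {c x B : ℝ≥0∞} (hx₀ : x ≠ 0) (hx : x ≠ ∞)
    (hcx : c * x ≤ B * x ^ (1 - 1 / s)) : c * x ^ (1 / s) ≤ B := by
  have hsplit : c * x = c * x ^ (1 / s) * x ^ (1 - 1 / s) := by
    rw [mul_assoc, ← ENNReal.rpow_add _ _ hx₀ hx, add_sub_cancel, ENNReal.rpow_one]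
  rw [hsplit] at hcx
  exact (ENNReal.mul_le_mul_iff_left (by simp [hx₀, hx]) (by simp [hx₀, hx])).1 hcx

lemma lintegral_Ioi_ofReal_rpow_neg {c s : ℝ} (hc : 0 < c) (hs : 1 < s) :
    ∫⁻ t in Ioi c, ENNReal.ofReal t ^ (-s)
      = ENNReal.ofReal (1 / (s - 1)) * ENNReal.ofReal c ^ (1 - s) := by
  have hpos : ∀ t ∈ Ioi c, 0 < t := fun t ht => hc.trans ht
  rw [setLIntegral_congr_fun measurableSet_Ioi fun t ht =>
      ENNReal.ofReal_rpow_of_pos (hpos t ht),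
    ← ofReal_integral_eq_lintegral_ofReal (integrableOn_Ioi_rpow_of_lt (by linarith) hc)
      ((ae_restrict_iff' measurableSet_Ioi).2 <| .of_forall fun t ht =>
        Real.rpow_nonneg (hpos t ht).le _),
    integral_Ioi_rpow_of_lt (by linarith) hc,
    show -c ^ (-s + 1) / (-s + 1) = 1 / (s - 1) * c ^ (1 - s) by
      rw [show -s + 1 = -(s - 1) by ring, div_neg, neg_div, neg_neg, neg_sub]; ring,
    ENNReal.ofReal_mul (one_div_pos.2 (sub_pos.2 hs)).le, ENNReal.ofReal_rpow_of_pos hc]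

lemma lintegral_Ioi_le_of_le_min {s : ℝ} (hs : 1 < s) {V W : ℝ≥0∞} (hV : V ≠ ∞)
    {F : ℝ → ℝ≥0∞} (hFV : ∀ t > 0, F t ≤ V) (hFW : ∀ t > 0, F t ≤ (W / ENNReal.ofReal t) ^ s) :
    ∫⁻ t in Ioi 0, F t ≤ ENNReal.ofReal (s / (s - 1)) * W * V ^ (1 - 1 / s) := by
  have hs₀ : 0 < s := by linarith
  have hs₁ : 0 < s - 1 := sub_pos.2 hs
  by_cases hVW : V = 0 ∨ W = 0
  · refine (setLIntegral_mono' measurableSet_Ioi fun t ht => ?_ :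
      _ ≤ ∫⁻ _ in Ioi (0 : ℝ), (0 : ℝ≥0∞)).trans (by simp)
    rcases hVW with rfl | rfl
    · exact hFV t ht
    · simpa [ENNReal.zero_rpow_of_pos hs₀] using hFW t ht
  obtain ⟨hV₀, hW₀⟩ := not_or.1 hVW
  rcases eq_or_ne W ∞ with rfl | hW
  · rw [ENNReal.mul_top (by simp [div_pos hs₀ hs₁]), ENNReal.top_mul (by simp [hV₀, hV])]
    exact le_top
  set u := W * V ^ (-(1 / s)) with hu_def
  have hu₀ : u ≠ 0 := mul_ne_zero hW₀ (by simp [hV₀, hV])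
  have hu : u ≠ ∞ := ENNReal.mul_ne_top hW (by simp [hV₀, hV])
  set c := u.toReal
  have hc : 0 < c := ENNReal.toReal_pos hu₀ hu
  have hcu : ENNReal.ofReal c = u := ENNReal.ofReal_toReal hu
  -- `c = W V^{-1/s}` is where the two bounds on `F` cross, and each half contributes `V u`
  have hVu : V * u = W * V ^ (1 - 1 / s) := by
    rw [hu_def, mul_left_comm, sub_eq_add_neg, ENNReal.rpow_add _ _ hV₀ hV, ENNReal.rpow_one]
  have hWs : W ^ s = V * u ^ s := by
    rw [hu_def, ENNReal.mul_rpow_of_ne_top hW (by simp [hV₀, hV]), ← ENNReal.rpow_mul,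
      show -(1 / s) * s = -1 by field_simp, ENNReal.rpow_neg_one, mul_left_comm,
      ENNReal.mul_inv_cancel hV₀ hV, mul_one]
  have hlow : ∫⁻ t in Ioc 0 c, F t ≤ V * u := by
    calc ∫⁻ t in Ioc 0 c, F t ≤ ∫⁻ _ in Ioc 0 c, V :=
          setLIntegral_mono' measurableSet_Ioc fun t ht => hFV t ht.1
      _ = V * u := by rw [setLIntegral_const, Real.volume_Ioc, sub_zero, hcu]
  have hhigh : ∫⁻ t in Ioi c, F t ≤ ENNReal.ofReal (1 / (s - 1)) * (V * u) := by
    calc ∫⁻ t in Ioi c, F t ≤ ∫⁻ t in Ioi c, W ^ s * ENNReal.ofReal t ^ (-s) := by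
          refine setLIntegral_mono' measurableSet_Ioi fun t ht => (hFW t (hc.trans ht)).trans ?_
          rw [ENNReal.div_rpow_of_nonneg _ _ hs₀.le, div_eq_mul_inv, ENNReal.rpow_neg]
      _ = ENNReal.ofReal (1 / (s - 1)) * (V * u) := by
          rw [lintegral_const_mul' _ _ (by simp [hW₀, hW]), lintegral_Ioi_ofReal_rpow_neg hc hs,
            hcu, hWs, mul_left_comm, mul_assoc, ← ENNReal.rpow_add _ _ hu₀ hu, add_sub_cancel,
            ENNReal.rpow_one]
  calc ∫⁻ t in Ioi 0, F t = (∫⁻ t in Ioc 0 c, F t) + ∫⁻ t in Ioi c, F t := by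
        rw [← Ioc_union_Ioi_eq_Ioi hc.le, lintegral_union measurableSet_Ioi Ioc_disjoint_Ioi_same]
    _ ≤ V * u + ENNReal.ofReal (1 / (s - 1)) * (V * u) := add_le_add hlow hhigh
    _ = ENNReal.ofReal (s / (s - 1)) * W * V ^ (1 - 1 / s) := by
        rw [← one_add_mul, ← ENNReal.ofReal_one,
          ← ENNReal.ofReal_add zero_le_one (one_div_pos.2 hs₁).le,
          show 1 + 1 / (s - 1) = s / (s - 1) by field_simp; ring, hVu, mul_assoc]

section WeakNorm

variable {Ω : Type*} [MeasurableSpace Ω] {μ : Measure Ω} {s : ℝ} {h : Ω → ℝ≥0∞}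

lemma lintegral_eq_lintegral_meas_ofReal_lt [SFinite μ] (hm : Measurable h) :
    ∫⁻ x, h x ∂μ = ∫⁻ t in Ioi 0, μ {x | ENNReal.ofReal t < h x} := by
  have hvol : ∀ a : ℝ≥0∞, volume ({t : ℝ | ENNReal.ofReal t < a} ∩ Ioi 0) = a := by
    intro a
    rcases eq_or_ne a ∞ with rfl | ha
    · simp
    · rw [show {t : ℝ | ENNReal.ofReal t < a} ∩ Ioi 0 = Ioo 0 a.toReal by
        ext t
        simp only [mem_inter_iff, mem_Ioi, mem_ofPred_eq, mem_Ioo, and_comm (a := _ < a)]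
        exact and_congr_right fun ht => ENNReal.ofReal_lt_iff_lt_toReal ht.le ha]
      rw [Real.volume_Ioo, sub_zero, ENNReal.ofReal_toReal ha]
  set T := {p : Ω × ℝ | ENNReal.ofReal p.2 < h p.1}
  have hT : MeasurableSet T :=
    measurableSet_lt measurable_snd.ennreal_ofReal (hm.comp measurable_fst)
  calc ∫⁻ x, h x ∂μ = ∫⁻ x, (∫⁻ t in Ioi 0, T.indicator 1 (x, t)) ∂μ := by
        refine lintegral_congr fun x => ?_
        rw [← hvol (h x), ← Measure.restrict_apply' measurableSet_Ioi]
        exact (lintegral_indicator_one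
          (measurableSet_lt measurable_id.ennreal_ofReal measurable_const)).symm
    _ = ∫⁻ t in Ioi 0, ∫⁻ x, T.indicator 1 (x, t) ∂μ :=
        lintegral_lintegral_swap (measurable_one.indicator hT).aemeasurable
    _ = ∫⁻ t in Ioi 0, μ {x | ENNReal.ofReal t < h x} := lintegral_congr fun t =>
        lintegral_indicator_one (s := {x | ENNReal.ofReal t < h x}) (hm measurableSet_Ioi)

lemma meas_lt_le_weakNormE_div_rpow (hs : 0 < s) {c : ℝ≥0} (hc : c ≠ 0) :
    μ {x | (c : ℝ≥0∞) < h x} ≤ (weakNormE μ s h / c) ^ s :=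
  (ENNReal.mul_rpow_one_div_le_iff (by simpa) ENNReal.coe_ne_top hs).1 <|
    le_iSup (fun c : ℝ≥0 => (c : ℝ≥0∞) * μ {x | (c : ℝ≥0∞) < h x} ^ (1 / s)) c

lemma setLIntegral_le_weakNormE (hs : 1 < s) (hm : Measurable h) {E : Set Ω} (hE : μ E ≠ ∞) :
    ∫⁻ x in E, h x ∂μ ≤ ENNReal.ofReal (s / (s - 1)) * weakNormE μ s h * μ E ^ (1 - 1 / s) := by
  have : IsFiniteMeasure (μ.restrict E) :=
    ⟨by rwa [Measure.restrict_apply_univ, lt_top_iff_ne_top]⟩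
  rw [lintegral_eq_lintegral_meas_ofReal_lt hm]
  refine lintegral_Ioi_le_of_le_min hs hE
    (fun t _ => (measure_mono (subset_univ _)).trans_eq (Measure.restrict_apply_univ E))
    (fun t ht => (Measure.restrict_apply_le _ _).trans ?_)
  exact meas_lt_le_weakNormE_div_rpow (by linarith) (c := t.toNNReal) (by simpa using ht)

lemma weakNormE_le_of_setLIntegral_le [SigmaFinite μ] (hs : 0 < s) (hm : Measurable h)
    {B : ℝ≥0∞}
    (hB : ∀ A, MeasurableSet A → μ A ≠ ∞ → ∫⁻ x in A, h x ∂μ ≤ B * μ A ^ (1 - 1 / s)) :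
    weakNormE μ s h ≤ B := by
  refine iSup_le fun c => ?_
  rcases eq_or_ne c 0 with rfl | hc
  · simp
  have hc' : (c : ℝ≥0∞) ≠ 0 := by simpa
  rw [ENNReal.mul_rpow_one_div_le_iff hc' ENNReal.coe_ne_top hs,
    ← Measure.iSup_restrict_spanningSets]
  refine iSup_le fun n => ?_
  rw [Measure.restrict_apply' (measurableSet_spanningSets μ n),
    ← ENNReal.mul_rpow_one_div_le_iff hc' ENNReal.coe_ne_top hs]
  set A := {x | (c : ℝ≥0∞) < h x} ∩ spanningSets μ n
  have hA : μ A ≠ ∞ :=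
    ((measure_mono inter_subset_right).trans_lt (measure_spanningSets_lt_top μ n)).ne
  rcases eq_or_ne (μ A) 0 with hA₀ | hA₀
  · simp [hA₀, ENNReal.zero_rpow_of_pos (inv_pos.2 hs)]
  refine ENNReal.mul_rpow_one_div_le_of_mul_le hA₀ hA ?_
  calc c * μ A = ∫⁻ _ in A, (c : ℝ≥0∞) ∂μ := (setLIntegral_const _ _).symm
    _ ≤ ∫⁻ x in A, h x ∂μ := setLIntegral_mono hm fun x hx => hx.1.le
    _ ≤ B * μ A ^ (1 - 1 / s) :=
      hB A ((hm measurableSet_Ioi).inter (measurableSet_spanningSets μ n)) hA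

end WeakNorm

lemma lorentzNorm_indicator_const {Ω : Type*} [MeasurableSpace Ω] (μ : Measure Ω) (E : Set Ω)
    {r a : ℝ} (hr : 0 < 1 / r) (ha : 0 ≤ a) :
    lorentzNorm μ r (E.indicator fun _ => a) = ENNReal.ofReal a * μ E ^ (1 / r) := by
  have hlevel : ∀ c ∈ Ioi (0 : ℝ), μ {y | c < |E.indicator (fun _ => a) y|} ^ (1 / r)
      = (Iio a).indicator (fun _ => μ E ^ (1 / r)) c := by
    intro c (hc : 0 < c)
    by_cases hca : c < a
    · have : {y | c < |E.indicator (fun _ => a) y|} = E := by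
        ext y
        by_cases hy : y ∈ E <;> simp [hy, abs_of_nonneg ha, hca, not_lt.2 hc.le]
      rw [this, indicator_of_mem (mem_Iio.2 hca)]
    · have : {y | c < |E.indicator (fun _ => a) y|} = ∅ := by
        ext y
        by_cases hy : y ∈ E <;> simp [hy, abs_of_nonneg ha, hca, not_lt.2 hc.le]
      rw [this, indicator_of_notMem (mt mem_Iio.1 hca), measure_empty, ENNReal.zero_rpow_of_pos hr]
  rw [lorentzNorm, setLIntegral_congr_fun measurableSet_Ioi hlevel,
    lintegral_indicator measurableSet_Iio, setLIntegral_const,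
    Measure.restrict_apply measurableSet_Iio, Iio_inter_Ioi, Real.volume_Ioo, sub_zero, mul_comm]

section Kernel

variable {Ω₁ Ω₂ : Type*} [MeasurableSpace Ω₁] [MeasurableSpace Ω₂]
  {μ₁ : Measure Ω₁} {μ₂ : Measure Ω₂} {p₁' p₂' θ r s : ℝ} {f : Ω₁ × Ω₂ → ℝ} {g : Ω₂ → ℝ}

lemma setLIntegral_le_Mfunc_of_ne_top [SFinite μ₂] {E₁ : Set Ω₁} {E₂ : Set Ω₂}
    (hE₁ : MeasurableSet E₁) (hE₂ : MeasurableSet E₂) (h₁ : μ₁ E₁ ≠ ∞) (h₂ : μ₂ E₂ ≠ ∞) :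
    ∫⁻ z in E₁ ×ˢ E₂, ‖f z‖₊ ∂(μ₁.prod μ₂)
      ≤ Mfunc μ₁ μ₂ p₁' p₂' θ f * μ₁ E₁ ^ ((1 - θ) / p₁') * μ₂ E₂ ^ (θ / p₂') := by
  by_cases h₀ : μ₁ E₁ = 0 ∨ μ₂ E₂ = 0
  · rw [setLIntegral_measure_zero _ _
      (by rw [Measure.prod_prod]; rcases h₀ with h | h <;> simp [h])]
    exact zero_le
  obtain ⟨h₁₀, h₂₀⟩ := not_or.1 h₀
  set u := μ₁ E₁ ^ ((1 - θ) / p₁')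
  set v := μ₂ E₂ ^ (θ / p₂')
  have hu₀ : u ≠ 0 := by simp [u, h₁₀, h₁]
  have hu : u ≠ ∞ := by simp [u, h₁₀, h₁]
  have hv₀ : v ≠ 0 := by simp [v, h₂₀, h₂]
  have hv : v ≠ ∞ := by simp [v, h₂₀, h₂]
  have hM : (∫⁻ z in E₁ ×ˢ E₂, ‖f z‖₊ ∂(μ₁.prod μ₂)) * u⁻¹ * v⁻¹ ≤ Mfunc μ₁ μ₂ p₁' p₂' θ f := by
    rw [← ENNReal.rpow_neg, ← ENNReal.rpow_neg, ← neg_div, ← neg_div]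
    exact le_iSup_of_le E₁ <| le_iSup_of_le E₂ <| le_iSup_of_le hE₁ <| le_iSup_of_le hE₂ <|
      le_iSup_of_le (pos_iff_ne_zero.2 h₁₀) <| le_iSup_of_le h₁.lt_top <|
      le_iSup_of_le (pos_iff_ne_zero.2 h₂₀) <| le_iSup_of_le h₂.lt_top le_rfl
  rwa [ENNReal.mul_inv_le_iff hv₀ hv, ENNReal.mul_inv_le_iff hu₀ hu, mul_right_comm] at hM

lemma setLIntegral_le_Mfunc [SigmaFinite μ₁] [SigmaFinite μ₂]
    (ha : 0 ≤ (1 - θ) / p₁') (hb : 0 ≤ θ / p₂') {E₁ : Set Ω₁} {E₂ : Set Ω₂}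
    (hE₁ : MeasurableSet E₁) (hE₂ : MeasurableSet E₂) :
    ∫⁻ z in E₁ ×ˢ E₂, ‖f z‖₊ ∂(μ₁.prod μ₂)
      ≤ Mfunc μ₁ μ₂ p₁' p₂' θ f * μ₁ E₁ ^ ((1 - θ) / p₁') * μ₂ E₂ ^ (θ / p₂') := by
  set R : ℕ → Set (Ω₁ × Ω₂) := fun n => (E₁ ∩ spanningSets μ₁ n) ×ˢ (E₂ ∩ spanningSets μ₂ n)
  have hR : Monotone R := fun m n hmn =>
    prod_mono (inter_subset_inter_right _ (monotone_spanningSets μ₁ hmn))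
      (inter_subset_inter_right _ (monotone_spanningSets μ₂ hmn))
  have hRU : ⋃ n, R n = E₁ ×ˢ E₂ := by
    rw [iUnion_prod_of_monotone (fun m n hmn => inter_subset_inter_right _
        (monotone_spanningSets μ₁ hmn)) (fun m n hmn => inter_subset_inter_right _
        (monotone_spanningSets μ₂ hmn)),
      ← inter_iUnion, ← inter_iUnion, iUnion_spanningSets, iUnion_spanningSets, inter_univ,
      inter_univ]
  rw [← withDensity_apply _ (hE₁.prod hE₂), ← hRU, hR.measure_iUnion]
  refine iSup_le fun n => ?_
  rw [withDensity_apply _ ((hE₁.inter (measurableSet_spanningSets μ₁ n)).prod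
    (hE₂.inter (measurableSet_spanningSets μ₂ n)))]
  calc _ ≤ Mfunc μ₁ μ₂ p₁' p₂' θ f * μ₁ (E₁ ∩ spanningSets μ₁ n) ^ ((1 - θ) / p₁')
        * μ₂ (E₂ ∩ spanningSets μ₂ n) ^ (θ / p₂') :=
      setLIntegral_le_Mfunc_of_ne_top (hE₁.inter (measurableSet_spanningSets μ₁ n))
        (hE₂.inter (measurableSet_spanningSets μ₂ n))
        (measure_inter_lt_top_of_right_ne_top (measure_spanningSets_lt_top μ₁ n).ne).ne
        (measure_inter_lt_top_of_right_ne_top (measure_spanningSets_lt_top μ₂ n).ne).ne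
    _ ≤ _ := by gcongr <;> exact inter_subset_left

lemma measurable_kernelOp [SFinite μ₂] (hf : Measurable f) (hg : Measurable g) :
    Measurable (kernelOp μ₂ f g) :=
  Measurable.lintegral_prod_right' <|
    hf.nnnorm.coe_nnreal_ennreal.mul (hg.nnnorm.coe_nnreal_ennreal.comp measurable_snd)

lemma setLIntegral_kernelOp_le [SigmaFinite μ₁] [SigmaFinite μ₂]
    (ha : 0 ≤ (1 - θ) / p₁') (hb : 0 ≤ θ / p₂') (hr : 1 / r = θ / p₂')
    (hf : Measurable f) (hg : Measurable g) {A : Set Ω₁} (hA : MeasurableSet A) :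
    ∫⁻ x in A, kernelOp μ₂ f g x ∂μ₁
      ≤ Mfunc μ₁ μ₂ p₁' p₂' θ f * μ₁ A ^ ((1 - θ) / p₁') * lorentzNorm μ₂ r g := by
  set ν := ((μ₁.restrict A).prod μ₂).withDensity fun z => (‖f z‖₊ : ℝ≥0∞)
  have hgabs : Measurable fun z : Ω₁ × Ω₂ => |g z.2| := (hg.comp measurable_snd).abs
  have hlevel : ∀ t, ν {z | t < |g z.2|}
      = ∫⁻ z in A ×ˢ {y | t < |g y|}, ‖f z‖₊ ∂(μ₁.prod μ₂) := by
    intro t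
    rw [withDensity_apply _ (measurableSet_lt measurable_const hgabs),
      show {z : Ω₁ × Ω₂ | t < |g z.2|} = univ ×ˢ {y | t < |g y|} by ext; simp,
      ← Measure.prod_restrict, Measure.restrict_univ, Measure.prod_restrict]
  have hlorentz : Measurable fun t : ℝ => μ₂ {y | t < |g y|} ^ (1 / r) :=
    Measurable.pow_const (Antitone.measurable fun t t' htt' =>
      measure_mono fun y (hy : t' < |g y|) => htt'.trans_lt hy) _
  calc ∫⁻ x in A, kernelOp μ₂ f g x ∂μ₁ = ∫⁻ z, ENNReal.ofReal |g z.2| ∂ν := by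
        rw [lintegral_withDensity_eq_lintegral_mul _ hf.nnnorm.coe_nnreal_ennreal
          hgabs.ennreal_ofReal, lintegral_prod _ (by fun_prop)]
        simp only [kernelOp, Pi.mul_apply, ← Real.enorm_eq_ofReal_abs, enorm_eq_nnnorm]
    _ = ∫⁻ t in Ioi 0, ν {z | t < |g z.2|} :=
        lintegral_eq_lintegral_meas_lt ν (ae_of_all _ fun _ => abs_nonneg _) hgabs.aemeasurable
    _ ≤ ∫⁻ t in Ioi 0, Mfunc μ₁ μ₂ p₁' p₂' θ f * μ₁ A ^ ((1 - θ) / p₁')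
          * μ₂ {y | t < |g y|} ^ (1 / r) := by
        refine lintegral_mono fun t => ?_
        rw [hlevel, hr]
        exact setLIntegral_le_Mfunc ha hb hA (measurableSet_lt measurable_const hg.abs)
    _ = Mfunc μ₁ μ₂ p₁' p₂' θ f * μ₁ A ^ ((1 - θ) / p₁') * lorentzNorm μ₂ r g :=
        lintegral_const_mul _ hlorentz

lemma weakNormE_kernelOp_le [SigmaFinite μ₁] [SigmaFinite μ₂] (hs₀ : 0 < s)
    (hs : 1 - 1 / s = (1 - θ) / p₁') (hr : 1 / r = θ / p₂')
    (ha : 0 ≤ (1 - θ) / p₁') (hb : 0 ≤ θ / p₂') (hf : Measurable f) (hg : Measurable g) :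
    weakNormE μ₁ s (kernelOp μ₂ f g) ≤ Mfunc μ₁ μ₂ p₁' p₂' θ f * lorentzNorm μ₂ r g := by
  refine weakNormE_le_of_setLIntegral_le hs₀ (measurable_kernelOp hf hg) fun A hA _ => ?_
  rw [hs, mul_right_comm]
  exact setLIntegral_kernelOp_le ha hb hr hf hg hA

lemma setLIntegral_kernelOp_indicator_const [SFinite μ₁] [SFinite μ₂] (hf : Measurable f)
    {E₁ : Set Ω₁} {E₂ : Set Ω₂} (hE₂ : MeasurableSet E₂) {a : ℝ} (ha : 0 ≤ a) :
    ∫⁻ x in E₁, kernelOp μ₂ f (E₂.indicator fun _ => a) x ∂μ₁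
      = ENNReal.ofReal a * ∫⁻ z in E₁ ×ˢ E₂, ‖f z‖₊ ∂(μ₁.prod μ₂) := by
  have hker : ∀ x, kernelOp μ₂ f (E₂.indicator fun _ => a) x
      = ENNReal.ofReal a * ∫⁻ y in E₂, ‖f (x, y)‖₊ ∂μ₂ := by
    intro x
    rw [← lintegral_const_mul' _ _ ENNReal.ofReal_ne_top, ← lintegral_indicator hE₂, kernelOp]
    congr with y
    by_cases hy : y ∈ E₂ <;>
      simp [hy, ← enorm_eq_nnnorm, Real.enorm_eq_ofReal ha, mul_comm]
  simp_rw [hker]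
  rw [lintegral_const_mul' _ _ ENNReal.ofReal_ne_top, setLIntegral_prod _
    hf.nnnorm.coe_nnreal_ennreal.aemeasurable]

variable (μ₁ μ₂ r s) in
noncomputable def kernelOpNorm (f : Ω₁ × Ω₂ → ℝ) : ℝ≥0∞ :=
  ⨆ (g : Ω₂ → ℝ) (_ : Measurable g) (_ : lorentzNorm μ₂ r g ≤ 1),
    weakNormE μ₁ s (kernelOp μ₂ f g)

lemma weakNormE_le_kernelOpNorm {g : Ω₂ → ℝ} (hg : Measurable g) (hL : lorentzNorm μ₂ r g ≤ 1) :
    weakNormE μ₁ s (kernelOp μ₂ f g) ≤ kernelOpNorm μ₁ μ₂ r s f :=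
  le_iSup_of_le g <| le_iSup_of_le hg <| le_iSup_of_le hL le_rfl

lemma kernelOpNorm_le {B : ℝ≥0∞}
    (hB : ∀ g, Measurable g → weakNormE μ₁ s (kernelOp μ₂ f g) ≤ B * lorentzNorm μ₂ r g) :
    kernelOpNorm μ₁ μ₂ r s f ≤ B :=
  iSup₂_le fun g hg => iSup_le fun hL => (hB g hg).trans (mul_le_of_le_one_right' hL)

lemma Mfunc_le_kernelOpNorm [SFinite μ₁] [SFinite μ₂] (hs₁ : 1 < s)
    (hs : 1 - 1 / s = (1 - θ) / p₁') (hr : 1 / r = θ / p₂') (hr₀ : 0 < 1 / r)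
    (hf : Measurable f) :
    Mfunc μ₁ μ₂ p₁' p₂' θ f ≤ ENNReal.ofReal (s / (s - 1)) * kernelOpNorm μ₁ μ₂ r s f := by
  simp only [Mfunc, iSup_le_iff]
  intro E₁ E₂ hE₁ hE₂ h₁₀ h₁ h₂₀ h₂
  set a := (μ₂ E₂).toReal ^ (-(1 / r))
  have ha : 0 ≤ a := Real.rpow_nonneg ENNReal.toReal_nonneg _
  have hofa : ENNReal.ofReal a = μ₂ E₂ ^ (-(1 / r)) := by
    rw [← ENNReal.ofReal_rpow_of_pos (ENNReal.toReal_pos h₂₀.ne' h₂.ne),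
      ENNReal.ofReal_toReal h₂.ne]
  set g := E₂.indicator fun _ => a
  have hg : Measurable g := measurable_const.indicator hE₂
  have hL : lorentzNorm μ₂ r g = 1 := by
    rw [lorentzNorm_indicator_const μ₂ E₂ hr₀ ha, hofa,
      ← ENNReal.rpow_add _ _ h₂₀.ne' h₂.ne, neg_add_cancel, ENNReal.rpow_zero]
  have hkol := setLIntegral_le_weakNormE hs₁ (measurable_kernelOp (μ₂ := μ₂) hf hg) h₁.ne (μ := μ₁)
  rw [setLIntegral_kernelOp_indicator_const hf hE₂ ha, hofa] at hkol
  have hu₀ : μ₁ E₁ ^ (1 - 1 / s) ≠ 0 := by simp [h₁₀.ne', h₁.ne]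
  have hu : μ₁ E₁ ^ (1 - 1 / s) ≠ ∞ := by simp [h₁₀.ne', h₁.ne]
  rw [neg_div, neg_div, ← hs, ← hr, ENNReal.rpow_neg, mul_right_comm, mul_comm _ (_ ^ _),
    ENNReal.mul_inv_le_iff hu₀ hu]
  calc μ₂ E₂ ^ (-(1 / r)) * ∫⁻ z in E₁ ×ˢ E₂, ‖f z‖₊ ∂(μ₁.prod μ₂)
      ≤ ENNReal.ofReal (s / (s - 1)) * weakNormE μ₁ s (kernelOp μ₂ f g) * μ₁ E₁ ^ (1 - 1 / s) :=
        hkol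
    _ ≤ ENNReal.ofReal (s / (s - 1)) * kernelOpNorm μ₁ μ₂ r s f * μ₁ E₁ ^ (1 - 1 / s) := by
        gcongr
        exact weakNormE_le_kernelOpNorm hg hL.le

end Kernel

/-- Operator form of the interpolation condition (case `q = 1`): the quantity `M(f)` and the
norm of `T_{|f|} : L_{r,1}(μ₂) → L_{s,∞}(μ₁)` are equivalent up to constants depending only on
`p₁, p₂, θ`; in particular `M(f) < ∞` iff `T_{|f|}` is bounded from `L_{r,1}(μ₂)` to
`L_{s,∞}(μ₁)`. -/
theorem operator_form_interpolation
    {Ω₁ Ω₂ : Type*} [MeasurableSpace Ω₁] [MeasurableSpace Ω₂]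
    (μ₁ : Measure Ω₁) (μ₂ : Measure Ω₂) [SigmaFinite μ₁] [SigmaFinite μ₂]
    (p₁ p₂ p₁' p₂' θ r s : ℝ) (hp₁ : 1 < p₁) (hp₂ : 1 < p₂)
    (hp₁' : p₁' = p₁ / (p₁ - 1)) (hp₂' : p₂' = p₂ / (p₂ - 1))
    (hθ : 0 < θ) (hθ1 : θ < 1)
    (hr : 1 / r = θ / p₂') (hs : 1 - 1 / s = (1 - θ) / p₁') :
    ∃ c C : ℝ≥0, 0 < c ∧ 0 < C ∧
      ∀ f : Ω₁ × Ω₂ → ℝ, Measurable f →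
        ((c : ℝ≥0∞) * Mfunc μ₁ μ₂ p₁' p₂' θ f
            ≤ ⨆ (g : Ω₂ → ℝ) (_ : Measurable g) (_ : lorentzNorm μ₂ r g ≤ 1),
                weakNormE μ₁ s (kernelOp μ₂ f g)) ∧
        ((⨆ (g : Ω₂ → ℝ) (_ : Measurable g) (_ : lorentzNorm μ₂ r g ≤ 1),
              weakNormE μ₁ s (kernelOp μ₂ f g))
            ≤ (C : ℝ≥0∞) * Mfunc μ₁ μ₂ p₁' p₂' θ f) ∧
        (Mfunc μ₁ μ₂ p₁' p₂' θ f < ∞ ↔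
          ∃ C' : ℝ≥0, ∀ g : Ω₂ → ℝ, Measurable g →
            weakNormE μ₁ s (kernelOp μ₂ f g) ≤ (C' : ℝ≥0∞) * lorentzNorm μ₂ r g) := by
  have hp₁'₁ : 1 < p₁' := hp₁' ▸ (Real.HolderConjugate.conjExponent hp₁).symm.lt
  have hp₂'₀ : 0 < p₂' := hp₂' ▸ (Real.HolderConjugate.conjExponent hp₂).right_pos
  have ha : 0 < (1 - θ) / p₁' := div_pos (sub_pos.2 hθ1) (by linarith)
  have hb : 0 < θ / p₂' := div_pos hθ hp₂'₀
  have ha₁ : (1 - θ) / p₁' < 1 := (div_lt_one (by linarith)).2 (by linarith)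
  have hs₀ : 0 < s := one_div_pos.1 (by linarith)
  have hs₁ : 1 < s := by
    by_contra! h
    linarith [one_le_one_div hs₀ h]
  refine ⟨((s - 1) / s).toNNReal, 1, by simp [hs₀, hs₁], one_pos, fun f hf => ?_⟩
  have hupper g (hg : Measurable g) :=
    weakNormE_kernelOp_le (μ₁ := μ₁) (μ₂ := μ₂) hs₀ hs hr ha.le hb.le hf hg
  have hlower := Mfunc_le_kernelOpNorm (μ₁ := μ₁) (μ₂ := μ₂) hs₁ hs hr (hr ▸ hb) hf
  refine ⟨?_, ?_, fun hM => ⟨(Mfunc μ₁ μ₂ p₁' p₂' θ f).toNNReal, fun g hg => ?_⟩,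
    fun ⟨C', hC'⟩ => ?_⟩
  · calc ENNReal.ofReal ((s - 1) / s) * Mfunc μ₁ μ₂ p₁' p₂' θ f
        ≤ ENNReal.ofReal ((s - 1) / s) * ENNReal.ofReal (s / (s - 1))
          * kernelOpNorm μ₁ μ₂ r s f := by rw [mul_assoc]; gcongr
      _ = kernelOpNorm μ₁ μ₂ r s f := by
        rw [← ENNReal.ofReal_mul (div_nonneg (by linarith) hs₀.le),
          div_mul_div_cancel₀ hs₀.ne', div_self (sub_pos.2 hs₁).ne', ENNReal.ofReal_one, one_mul]
  · rw [ENNReal.coe_one, one_mul]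
    exact kernelOpNorm_le hupper
  · rw [ENNReal.coe_toNNReal hM.ne]
    exact hupper g hg
  · exact hlower.trans_lt (ENNReal.mul_lt_top ENNReal.ofReal_lt_top
      ((kernelOpNorm_le hC').trans_lt ENNReal.coe_lt_top))
end

section
/- (Operator norm identity II.) Let 1 < p₂ < ∞ with p₂' = p₂/(p₂−1) and let f : Ω₁ × Ω₂ → ℝ be measurable. Then the operator norm of the positive kernel operator T_{|f|}g(x) := ∫ |f(x,y)| g(y) dμ₂(y) from the Lorentz space L_{p₂',1}(μ₂), with norm [g]_{p₂',1} := ∫₀^∞ μ₂({|g| > c})^{1/p₂'} dc, to L_1(μ₁) equals ‖f‖_{L_{p₂,∞}(μ₂;L_1(μ₁))} := sup over measurable E ⊆ Ω₂ with 0 < μ₂(E) < ∞ of μ₂(E)^{−1/p₂'} ∫_E (∫ |f(x,y)| dμ₁(x)) dμ₂(y). That is, sup{ ∫ |T_{|f|}g| dμ₁ : [g]_{p₂',1} ≤ 1 } = ‖f‖_{L_{p₂,∞}(μ₂;L_1(μ₁))}. -/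
/-!
By Tonelli, `∫ T_{|f|} g dμ₁ = ∫ F |g| dμ₂` with `F y = ∫ |f(x,y)| dμ₁(x)`, so the claim is the duality
between the Lorentz norm `[g]_{p',1}` and the Marcinkiewicz norm of the weight `F`. The layer cake formula
writes `∫ F |g|` as `∫₀^∞ (∫_{|g|>c} F) dc`, and bounding each inner integral by
`‖F‖ μ({|g|>c})^{1/p'}` gives `≤`; normalized indicators of sets attain the supremum.
-/

open MeasureTheory ENNReal NNReal

section Duality

variable {α : Type*} [MeasurableSpace α] {μ : Measure α}

/-- The Lorentz norm `[g]_{p',1}` for `r = 1/p'`. -/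
noncomputable def lorentzOneNorm (μ : Measure α) (r : ℝ) (g : α → ℝ) : ℝ≥0∞ :=
  ∫⁻ c in Set.Ioi (0 : ℝ), μ {y | c < |g y|} ^ r

/-- The Marcinkiewicz norm of `F` in `L_{p,∞}`, for `r = 1/p' = 1 - 1/p`. -/
noncomputable def marcinkiewiczNorm (μ : Measure α) (r : ℝ) (F : α → ℝ≥0∞) : ℝ≥0∞ :=
  ⨆ (E : Set α) (_ : MeasurableSet E) (_ : 0 < μ E) (_ : μ E < ∞), μ E ^ (-r) * ∫⁻ y in E, F y ∂μ

theorem ofReal_mul_le_setLIntegral_Ioi_of_antitone {ψ : ℝ → ℝ≥0∞} (hψ : Antitone ψ) (c : ℝ) :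
    ENNReal.ofReal c * ψ c ≤ ∫⁻ t in Set.Ioi 0, ψ t :=
  calc ENNReal.ofReal c * ψ c = ∫⁻ _ in Set.Ioc 0 c, ψ c := by
        rw [setLIntegral_const, Real.volume_Ioc, sub_zero, mul_comm]
    _ ≤ ∫⁻ t in Set.Ioc 0 c, ψ t := setLIntegral_mono hψ.measurable fun _ ht => hψ ht.2
    _ ≤ ∫⁻ t in Set.Ioi 0, ψ t := lintegral_mono_set Set.Ioc_subset_Ioi_self

theorem antitone_measure_lt_abs_rpow (μ : Measure α) (g : α → ℝ) {r : ℝ} (hr : 0 ≤ r) :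
    Antitone fun c : ℝ => μ {y | c < |g y|} ^ r :=
  fun _ _ hab => rpow_le_rpow (measure_mono fun _ hy => hab.trans_lt hy) hr

theorem measure_lt_abs_ne_top_of_lorentzOneNorm_ne_top {r : ℝ} (hr : 0 < r) {g : α → ℝ}
    (hg : lorentzOneNorm μ r g ≠ ∞) {c : ℝ} (hc : 0 < c) : μ {y | c < |g y|} ≠ ∞ := by
  have hbound := ofReal_mul_le_setLIntegral_Ioi_of_antitone
    (antitone_measure_lt_abs_rpow μ g hr.le) c
  have hfin : ENNReal.ofReal c * μ {y | c < |g y|} ^ r ≠ ∞ := ne_top_of_le_ne_top hg hbound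
  exact ((rpow_lt_top_iff_of_pos hr).mp (lt_top_of_mul_ne_top_right hfin (by simpa using hc))).ne

theorem setLIntegral_le_marcinkiewiczNorm_mul (r : ℝ) {F : α → ℝ≥0∞} {E : Set α}
    (hE : MeasurableSet E) (hE_fin : μ E ≠ ∞) :
    ∫⁻ y in E, F y ∂μ ≤ marcinkiewiczNorm μ r F * μ E ^ r := by
  rcases eq_zero_or_pos (μ E) with hE_zero | hE_pos
  · simp [Measure.restrict_eq_zero.mpr hE_zero]
  have hle : μ E ^ (-r) * ∫⁻ y in E, F y ∂μ ≤ marcinkiewiczNorm μ r F :=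
    le_iSup₂_of_le E hE <| le_iSup₂_of_le hE_pos hE_fin.lt_top le_rfl
  calc ∫⁻ y in E, F y ∂μ = μ E ^ r * (μ E ^ (-r) * ∫⁻ y in E, F y ∂μ) := by
        rw [← mul_assoc, ← rpow_add _ _ hE_pos.ne' hE_fin, add_neg_cancel, ENNReal.rpow_zero, one_mul]
    _ ≤ μ E ^ r * marcinkiewiczNorm μ r F := by gcongr
    _ = marcinkiewiczNorm μ r F * μ E ^ r := mul_comm _ _

/-- Layer cake formula for `|g|` against the measure with density `F`. -/
theorem lintegral_mul_enorm_eq_lintegral_setLIntegral_lt {F : α → ℝ≥0∞} (hF : Measurable F)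
    {g : α → ℝ} (hg : Measurable g) :
    ∫⁻ y, F y * ‖g y‖ₑ ∂μ = ∫⁻ c in Set.Ioi 0, ∫⁻ y in {y | c < |g y|}, F y ∂μ := by
  calc ∫⁻ y, F y * ‖g y‖ₑ ∂μ = ∫⁻ y, ENNReal.ofReal |g y| ∂μ.withDensity F := by
        simp_rw [lintegral_withDensity_eq_lintegral_mul _ hF hg.abs.ennreal_ofReal, Pi.mul_apply,
          Real.enorm_eq_ofReal_abs]
    _ = ∫⁻ c in Set.Ioi 0, μ.withDensity F {y | c < |g y|} :=
        lintegral_eq_lintegral_meas_lt _ (ae_of_all _ fun _ => abs_nonneg _) hg.abs.aemeasurable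
    _ = _ := lintegral_congr fun c => withDensity_apply _ (measurableSet_lt measurable_const hg.abs)

theorem lintegral_mul_enorm_le_marcinkiewiczNorm_mul_lorentzOneNorm {r : ℝ} (hr : 0 < r)
    {F : α → ℝ≥0∞} (hF : Measurable F) {g : α → ℝ} (hg : Measurable g)
    (hg_fin : lorentzOneNorm μ r g ≠ ∞) :
    ∫⁻ y, F y * ‖g y‖ₑ ∂μ ≤ marcinkiewiczNorm μ r F * lorentzOneNorm μ r g := by
  rw [lintegral_mul_enorm_eq_lintegral_setLIntegral_lt hF hg, lorentzOneNorm,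
    ← lintegral_const_mul _ (antitone_measure_lt_abs_rpow μ g hr.le).measurable]
  exact setLIntegral_mono' measurableSet_Ioi fun c hc =>
    setLIntegral_le_marcinkiewiczNorm_mul r (measurableSet_lt measurable_const hg.abs)
      (measure_lt_abs_ne_top_of_lorentzOneNorm_ne_top hr hg_fin hc)

theorem lorentzOneNorm_indicator_const {r : ℝ} (hr : 0 < r) (E : Set α) (a : ℝ) : lorentzOneNorm μ r (E.indicator fun _ => a) = ‖a‖ₑ * μ E ^ r := by
  have hlevel : ∀ c ∈ Set.Ioi (0 : ℝ), μ {y | c < |E.indicator (fun _ => a) y|} ^ r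
      = (Set.Ioo 0 |a|).indicator (fun _ => μ E ^ r) c := by
    intro c hc
    by_cases hca : c < |a|
    · have hset : {y | c < |E.indicator (fun _ => a) y|} = E := by
        ext y; by_cases hy : y ∈ E <;> simp [hy, hca, (Set.mem_Ioi.mp hc).le]
      rw [hset, Set.indicator_of_mem (show c ∈ Set.Ioo 0 |a| from ⟨hc, hca⟩)]
    · have hset : {y | c < |E.indicator (fun _ => a) y|} = ∅ := by
        ext y; by_cases hy : y ∈ E <;> simp [hy, hca, (Set.mem_Ioi.mp hc).le]
      rw [hset, Set.indicator_of_notMem fun h => hca h.2, measure_empty, zero_rpow_of_pos hr]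
  rw [lorentzOneNorm, setLIntegral_congr_fun measurableSet_Ioi hlevel,
    lintegral_indicator measurableSet_Ioo, Measure.restrict_restrict measurableSet_Ioo,
    Set.inter_eq_self_of_subset_left Set.Ioo_subset_Ioi_self, setLIntegral_const, Real.volume_Ioo,
    sub_zero, ← Real.enorm_eq_ofReal_abs, mul_comm]

theorem lintegral_mul_enorm_indicator_const (F : α → ℝ≥0∞) {E : Set α} (hE : MeasurableSet E)
    (a : ℝ) : ∫⁻ y, F y * ‖E.indicator (fun _ => a) y‖ₑ ∂μ = (∫⁻ y in E, F y ∂μ) * ‖a‖ₑ := by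
  have hind : (fun y => F y * ‖E.indicator (fun _ => a) y‖ₑ) = E.indicator fun y => F y * ‖a‖ₑ := by
    ext y; by_cases hy : y ∈ E <;> simp [hy]
  rw [hind, lintegral_indicator hE, lintegral_mul_const' _ _ enorm_ne_top]

theorem iSup_lintegral_mul_enorm_eq_marcinkiewiczNorm {r : ℝ} (hr : 0 < r) {F : α → ℝ≥0∞}
    (hF : Measurable F) :
    ⨆ (g : α → ℝ) (_ : Measurable g) (_ : lorentzOneNorm μ r g ≤ 1), ∫⁻ y, F y * ‖g y‖ₑ ∂μ
      = marcinkiewiczNorm μ r F := by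
  refine le_antisymm (iSup_le fun g => iSup_le fun hg => iSup_le fun hg_le => ?_)
    (iSup_le fun E => iSup_le fun hE => iSup_le fun hE_pos => iSup_le fun hE_fin => ?_)
  · calc ∫⁻ y, F y * ‖g y‖ₑ ∂μ ≤ marcinkiewiczNorm μ r F * lorentzOneNorm μ r g :=
          lintegral_mul_enorm_le_marcinkiewiczNorm_mul_lorentzOneNorm hr hF hg
            (ne_top_of_le_ne_top one_ne_top hg_le)
      _ ≤ marcinkiewiczNorm μ r F := mul_le_of_le_one_right' hg_le
  · have hpow_pos : μ E ^ r ≠ 0 := (rpow_pos hE_pos hE_fin.ne).ne'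
    have hpow_fin : μ E ^ r ≠ ∞ := rpow_ne_top_of_nonneg hr.le hE_fin.ne
    set a : ℝ := ((μ E ^ r)⁻¹).toReal
    have ha : ‖a‖ₑ = (μ E ^ r)⁻¹ := by
      rw [Real.enorm_eq_ofReal toReal_nonneg, ofReal_toReal (inv_ne_top.mpr hpow_pos)]
    have hnorm : lorentzOneNorm μ r (E.indicator fun _ => a) ≤ 1 := by
      rw [lorentzOneNorm_indicator_const hr E, ha, ENNReal.inv_mul_cancel hpow_pos hpow_fin]
    refine le_iSup₂_of_le (E.indicator fun _ => a) (measurable_const.indicator hE) <|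
      le_iSup_of_le hnorm (le_of_eq ?_)
    rw [lintegral_mul_enorm_indicator_const F hE, ha, ← ENNReal.rpow_neg, mul_comm]

end Duality

theorem lintegral_lintegral_mul_swap {β γ : Type*} [MeasurableSpace β]
    [MeasurableSpace γ] {μ : Measure β} {ν : Measure γ} [SFinite μ] [SFinite ν]
    {f : β × γ → ℝ≥0∞} (hf : Measurable f) {g : γ → ℝ≥0∞} (hg : Measurable g) :
    ∫⁻ x, ∫⁻ y, f (x, y) * g y ∂ν ∂μ = ∫⁻ y, (∫⁻ x, f (x, y) ∂μ) * g y ∂ν := by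
  rw [lintegral_lintegral_swap (hf.mul (hg.comp measurable_snd)).aemeasurable]
  exact lintegral_congr fun y => lintegral_mul_const _ (hf.comp measurable_prodMk_right)

/-- Operator norm identity II: the norm of the positive kernel operator
`T_{|f|} : L_{p₂',1}(μ₂) → L_1(μ₁)`, where `L_{p₂',1}(μ₂)` carries the Lorentz norm
`[g]_{p₂',1} = ∫₀^∞ μ₂({|g| > c})^{1/p₂'} dc`, equals
`‖f‖_{L_{p₂,∞}(μ₂;L_1(μ₁))} = sup_E μ₂(E)^{-1/p₂'} ∫_E (∫ |f(x,y)| dμ₁) dμ₂`. -/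
theorem operator_norm_identity_II
    {Ω₁ Ω₂ : Type*} [MeasurableSpace Ω₁] [MeasurableSpace Ω₂]
    (μ₁ : Measure Ω₁) (μ₂ : Measure Ω₂) [SigmaFinite μ₁] [SigmaFinite μ₂]
    (p₂ p₂' : ℝ) (hp₂ : 1 < p₂) (hp₂' : p₂' = p₂ / (p₂ - 1))
    (f : Ω₁ × Ω₂ → ℝ) (hf : Measurable f) :
    (⨆ (g : Ω₂ → ℝ) (_ : Measurable g)
        (_ : (∫⁻ c in Set.Ioi (0 : ℝ), μ₂ {y | c < |g y|} ^ (1 / p₂')) ≤ 1),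
      ∫⁻ x, (∫⁻ y, (‖f (x, y)‖₊ : ℝ≥0∞) * ‖g y‖₊ ∂μ₂) ∂μ₁)
    = ⨆ (E : Set Ω₂) (_ : MeasurableSet E) (_ : 0 < μ₂ E) (_ : μ₂ E < ∞),
        μ₂ E ^ (-(1 / p₂')) *
          ∫⁻ y in E, (∫⁻ x, (‖f (x, y)‖₊ : ℝ≥0∞) ∂μ₁) ∂μ₂ := by
  have hr : 0 < 1 / p₂' := by
    have : 0 < p₂ - 1 := by linarith
    rw [hp₂']; positivity
  calc _ = ⨆ (g : Ω₂ → ℝ) (_ : Measurable g) (_ : lorentzOneNorm μ₂ (1 / p₂') g ≤ 1),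
          ∫⁻ y, (∫⁻ x, ‖f (x, y)‖ₑ ∂μ₁) * ‖g y‖ₑ ∂μ₂ :=
        iSup_congr fun g => iSup_congr fun hg => iSup_congr fun _ =>
          lintegral_lintegral_mul_swap hf.enorm hg.enorm
    _ = _ := iSup_lintegral_mul_enorm_eq_marcinkiewiczNorm hr hf.enorm.lintegral_prod_left
end

section
/- (Conditional expectation version, converse with constant 2.) Suppose x : Ω → ℝ is integrable and for every pair of sets E₁, E₂ ⊆ Ω with Eⱼ measurable with respect to ℬⱼ one has ∫_{E₁∩E₂} |x| dμ ≤ μ(E₁) + μ(E₂). Then there exist integrable x₁, x₂ with x = x₁ + x₂ μ-almost everywhere and ‖x₁‖_{C₁} + ‖x₂‖_{C₂} ≤ 2. -/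
open MeasureTheory ENNReal NNReal

/-- The norm `‖x‖_C = ess sup 𝔼_ℬ(|x|)` associated to a sub-σ-algebra `m`. -/
noncomputable def condLinftyNorm {Ω : Type*} [m0 : MeasurableSpace Ω] (μ : Measure Ω)
    (m : MeasurableSpace Ω) (x : Ω → ℝ) : ℝ≥0∞ :=
  essSup (fun ω => ENNReal.ofReal ((μ[fun ω' => |x ω'| | m]) ω)) μ

/-!
Let `ρ = |x| μ`. The hypothesis `ρ (E₁ ∩ E₂) ≤ μ E₁ + μ E₂`, integrated over level sets (layer
cake), gives `∫ min w₁ w₂ dρ ≤ ∫ w₁ dμ + ∫ w₂ dμ` for nonnegative `ℬⱼ`-measurable weights `wⱼ`.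
We look for the part `ν ≤ ρ` of `|x|` to be carried by `x₁`, subject to the constraints
`ν A / μ A + (ρ - ν) B / μ B ≤ 2` for `A ∈ ℬ₁`, `B ∈ ℬ₂`. These are linear in `ν`, so by
Hahn–Banach a finite family of them can be met up to `ε` as soon as each nonnegative combination
of them can; a combination with weights `W₁ = ∑ λᵢ 1_{Aᵢ} / μ Aᵢ`, `W₂ = ∑ λᵢ 1_{Bᵢ} / μ Bᵢ` is met
by `ν = ρ|_{W₁ ≤ W₂}`, since then its left side is `∫ min W₁ W₂ dρ`. Compactness of the additive
set functions between `0` and `ρ` yields one `ν` meeting all constraints, and being dominated by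
`ρ` it is a measure. Then `x₁ = (dν/dρ) x`, `x₂ = x - x₁`, and the suprema over `A` and `B` of the
two averages bound the two conditional `L^∞` norms and add up to at most `2`.
-/

open Set

theorem Convex.exists_forall_lt_add_of_forall_sum_mul_le {ι : Type*} [Fintype ι]
    {D : Set (ι → ℝ)} (hD : Convex ℝ D) (c : ι → ℝ)
    (h : ∀ w : ι → ℝ, 0 ≤ w → ∃ d ∈ D, ∑ i, w i * d i ≤ ∑ i, w i * c i)
    {ε : ℝ} (hε : 0 < ε) : ∃ d ∈ D, ∀ i, d i < c i + ε := by
  classical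
  by_contra! hfar
  set Q : Set (ι → ℝ) := ⋂ i, {y | y i < c i + ε}
  have hdisj : Disjoint Q D := disjoint_left.2 fun y hy hyD => by
    obtain ⟨i, hi⟩ := hfar y hyD
    exact (mem_iInter.1 hy i).not_ge hi
  have hQ : Convex ℝ Q :=
    convex_iInter fun i => convex_halfSpace_lt (LinearMap.proj (φ := fun _ : ι => ℝ) i).isLinear _
  obtain ⟨f, u, hfQ, hfD⟩ := geometric_hahn_banach_open hQ
    (isOpen_iInter_of_finite fun i => isOpen_lt (continuous_apply i) continuous_const) hD hdisj
  set w : ι → ℝ := fun i => f (Pi.single i 1)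
  have hf : ∀ y, f y = ∑ i, w i * y i := fun y => by
    conv_lhs => rw [← Finset.univ_sum_single y]
    refine (map_sum f _ _).trans (Finset.sum_congr rfl fun i _ => ?_)
    rw [show Pi.single i (y i) = y i • Pi.single i (1 : ℝ) by
      rw [← Pi.single_smul', smul_eq_mul, mul_one], map_smul, smul_eq_mul, mul_comm]
  -- `Q` contains the ray `c - t eᵢ`, `t ≥ 0`, on which `f` stays below `u`: so `f eᵢ ≥ 0`.
  have hray : ∀ i, ∀ t : ℝ, 0 ≤ t → c - t • Pi.single i 1 ∈ Q := fun i t ht =>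
    mem_iInter.2 fun j => by
      have : 0 ≤ t * (Pi.single i (1 : ℝ) : ι → ℝ) j :=
        mul_nonneg ht (by rcases eq_or_ne j i with rfl | hj <;> simp [*])
      simp only [mem_ofPred, Pi.sub_apply, Pi.smul_apply, smul_eq_mul]
      linarith
  have hfc : f c < u := hfQ c (mem_iInter.2 fun i => lt_add_of_pos_right _ hε)
  have hw : 0 ≤ w := fun i => by
    by_contra! hi
    have := hfQ _ (hray i ((u - f c) / -w i) (div_nonneg (by linarith) (neg_nonneg.2 hi.le)))
    rw [map_sub, map_smul, smul_eq_mul, div_mul_eq_mul_div, div_neg, mul_div_assoc,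
      div_self hi.ne] at this
    linarith
  obtain ⟨d, hd, hle⟩ := h w hw
  have := hfD d hd
  rw [hf] at this hfc
  linarith

theorem IsCompact.exists_mem_forall_le_of_forall_sum_mul_le {V J : Type*} [TopologicalSpace V]
    [AddCommGroup V] [Module ℝ V] {T : Set V} (hTc : IsCompact T) (hT : Convex ℝ T)
    (L : J → V →L[ℝ] ℝ) (c : J → ℝ)
    (h : ∀ (s : Finset J) (w : s → ℝ), 0 ≤ w → ∃ g ∈ T, ∑ j, w j * L j g ≤ ∑ j, w j * c j) :
    ∃ g ∈ T, ∀ j, L j g ≤ c j := by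
  classical
  obtain ⟨g, hgT, hg⟩ := hTc.inter_iInter_nonempty
    (fun p : J × ℕ => {g | L p.1 g ≤ c p.1 + 1 / (p.2 + 1)})
    (fun p => isClosed_le (L p.1).continuous continuous_const) fun u => by
      set s := u.image Prod.fst
      set N := u.sup Prod.snd
      have hD := hT.linear_image (LinearMap.pi fun j : s => (L j : V →ₗ[ℝ] ℝ))
      obtain ⟨_, ⟨g, hgT, rfl⟩, hg⟩ := hD.exists_forall_lt_add_of_forall_sum_mul_le
          (fun j => c j) (fun w hw => by
            obtain ⟨g, hgT, hg⟩ := h s w hw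
            exact ⟨_, mem_image_of_mem _ hgT, hg⟩) Nat.one_div_pos_of_nat
      refine ⟨g, hgT, mem_iInter₂.2 fun p hp => ?_⟩
      have hN : 1 / ((N : ℝ) + 1) ≤ 1 / ((p.2 : ℝ) + 1) := Nat.one_div_le_one_div (u.le_sup hp)
      have := hg ⟨p.1, Finset.mem_image_of_mem _ hp⟩
      simp only [LinearMap.pi_apply, ContinuousLinearMap.coe_coe] at this
      exact (this.trans_le (add_le_add_right hN _)).le
  refine ⟨g, hgT, fun j => le_of_forall_pos_lt_add fun ε hε => ?_⟩
  obtain ⟨n, hn⟩ := exists_nat_one_div_lt hε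
  exact (mem_iInter.1 hg (j, n)).trans_lt (add_lt_add_right hn _)

namespace MeasureTheory

variable {Ω : Type*} {m m₁ m₂ m0 : MeasurableSpace Ω}

theorem Measure.exists_eq_of_additive_of_le (ρ : Measure Ω) [IsFiniteMeasure ρ]
    (φ : Set Ω → ℝ≥0∞) (hφ_empty : φ ∅ = 0)
    (hφ_add : ∀ s t, MeasurableSet s → MeasurableSet t → Disjoint s t → φ (s ∪ t) = φ s + φ t)
    (hφ_le : ∀ s, MeasurableSet s → φ s ≤ ρ s) :
    ∃ ν : Measure Ω, ∀ s, MeasurableSet s → ν s = φ s := by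
  have hC : IsSetRing {s : Set Ω | MeasurableSet s} :=
    ⟨.empty, fun _ _ => .union, fun _ _ => .diff⟩
  let φC := hC.addContent_of_union φ hφ_empty fun hs ht => hφ_add _ _ hs ht
  refine ⟨Measure.ofMeasurable (fun s _ => φ s) hφ_empty fun f hf hd => ?_,
    fun s hs => Measure.ofMeasurable_apply s hs⟩
  -- domination by the finite measure `ρ` gives continuity at `∅`, hence σ-additivity
  refine addContent_iUnion_eq_sum_of_tendsto_zero hC φC
    (fun s hs => ((hφ_le s hs).trans_lt (measure_lt_top ρ s)).ne) (fun s hs hanti hempty => ?_)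
    hf (.iUnion hf) hd
  have hρ := tendsto_measure_iInter_atTop (μ := ρ) (fun n => (hs n).nullMeasurableSet) hanti
    ⟨0, measure_ne_top ρ _⟩
  rw [hempty, measure_empty] at hρ
  exact tendsto_of_tendsto_of_tendsto_of_le_of_le tendsto_const_nhds hρ (fun _ => zero_le)
    fun n => hφ_le _ (hs n)

theorem lintegral_ofReal_min_le_of_measure_inter_le (hm₁ : m₁ ≤ m0) (hm₂ : m₂ ≤ m0)
    {μ ρ : Measure Ω}
    (h : ∀ E₁ E₂, MeasurableSet[m₁] E₁ → MeasurableSet[m₂] E₂ → ρ (E₁ ∩ E₂) ≤ μ E₁ + μ E₂)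
    {w₁ w₂ : Ω → ℝ} (hw₁ : Measurable[m₁] w₁) (hw₂ : Measurable[m₂] w₂)
    (hw₁0 : 0 ≤ w₁) (hw₂0 : 0 ≤ w₂) :
    ∫⁻ ω, ENNReal.ofReal (min (w₁ ω) (w₂ ω)) ∂ρ ≤
      ∫⁻ ω, ENNReal.ofReal (w₁ ω) ∂μ + ∫⁻ ω, ENNReal.ofReal (w₂ ω) ∂μ := by
  have hw₁' := hw₁.mono hm₁ le_rfl
  have hw₂' := hw₂.mono hm₂ le_rfl
  rw [lintegral_eq_lintegral_meas_lt ρ (ae_of_all _ fun ω => le_min (hw₁0 ω) (hw₂0 ω))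
      (hw₁'.min hw₂').aemeasurable,
    lintegral_eq_lintegral_meas_lt μ (ae_of_all _ hw₁0) hw₁'.aemeasurable,
    lintegral_eq_lintegral_meas_lt μ (ae_of_all _ hw₂0) hw₂'.aemeasurable,
    ← lintegral_add_left (f := fun t => μ {ω | t < w₁ ω})
      (Antitone.measurable fun s t hst => measure_mono fun ω hω => hst.trans_lt hω)]
  refine lintegral_mono fun t => ?_
  simpa only [lt_min_iff, ofPred_and] using
    h {ω | t < w₁ ω} {ω | t < w₂ ω} (hw₁ measurableSet_Ioi) (hw₂ measurableSet_Ioi)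

def additiveMinorants (ρ : Measure Ω) : Set (Set Ω → ℝ) :=
  {g | (∀ s, g s ∈ Icc 0 (ρ.real s)) ∧
    ∀ s t, MeasurableSet s → MeasurableSet t → Disjoint s t → g (s ∪ t) = g s + g t}

theorem isCompact_additiveMinorants (ρ : Measure Ω) : IsCompact (additiveMinorants ρ) := by
  refine (isCompact_univ_pi fun s => isCompact_Icc).of_isClosed_subset ?_
    fun g hg => mem_univ_pi.2 hg.1
  simp only [additiveMinorants, ofPred_and, ofPred_forall]
  exact (isClosed_iInter fun s => isClosed_Icc.preimage (continuous_apply s)).inter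
    (isClosed_iInter fun s => isClosed_iInter fun t => isClosed_iInter fun _ =>
      isClosed_iInter fun _ => isClosed_iInter fun _ =>
        isClosed_eq (continuous_apply _) ((continuous_apply s).add (continuous_apply t)))

theorem convex_additiveMinorants (ρ : Measure Ω) : Convex ℝ (additiveMinorants ρ) := by
  rintro g ⟨hg, hg_add⟩ g' ⟨hg', hg'_add⟩ a b ha hb hab
  refine ⟨fun s => ⟨?_, ?_⟩, fun s t hs ht hst => ?_⟩
  · simp only [Pi.add_apply, Pi.smul_apply, smul_eq_mul]
    nlinarith [(hg s).1, (hg' s).1]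
  · calc (a • g + b • g') s ≤ a * ρ.real s + b * ρ.real s := by
          simp only [Pi.add_apply, Pi.smul_apply, smul_eq_mul]
          gcongr <;> [exact (hg s).2; exact (hg' s).2]
      _ = ρ.real s := by rw [← add_mul, hab, one_mul]
  · simp only [Pi.add_apply, Pi.smul_apply, smul_eq_mul, hg_add s t hs ht hst,
      hg'_add s t hs ht hst]
    ring

theorem measureReal_inter_mem_additiveMinorants (ρ : Measure Ω) [IsFiniteMeasure ρ] {S : Set Ω}
    (hS : MeasurableSet S) : (fun s => ρ.real (s ∩ S)) ∈ additiveMinorants ρ := by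
  refine ⟨fun s => ⟨measureReal_nonneg, measureReal_mono inter_subset_left⟩,
    fun s t _ ht hst => ?_⟩
  simp only [union_inter_distrib_right]
  exact measureReal_union (hst.mono inter_subset_left inter_subset_left) (ht.inter hS)

theorem exists_measure_le_of_mem_additiveMinorants {ρ : Measure Ω} [IsFiniteMeasure ρ]
    {g : Set Ω → ℝ} (hg : g ∈ additiveMinorants ρ) :
    ∃ ν ≤ ρ, ∀ s, MeasurableSet s → ν s = ENNReal.ofReal (g s) := by
  obtain ⟨hg_bdd, hg_add⟩ := hg
  obtain ⟨ν, hν⟩ := ρ.exists_eq_of_additive_of_le (fun s => ENNReal.ofReal (g s))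
    (by simpa using (hg_bdd ∅).2)
    (fun s t hs ht hst => by
      simp only [hg_add s t hs ht hst, ENNReal.ofReal_add (hg_bdd s).1 (hg_bdd t).1])
    (fun s _ => (ENNReal.ofReal_le_ofReal (hg_bdd s).2).trans_eq ofReal_measureReal)
  exact ⟨ν, Measure.le_iff.2 fun s hs => (hν s hs).trans_le
    ((ENNReal.ofReal_le_ofReal (hg_bdd s).2).trans_eq ofReal_measureReal), hν⟩

theorem integral_min_le_of_measure_inter_le (hm₁ : m₁ ≤ m0) (hm₂ : m₂ ≤ m0) {μ ρ : Measure Ω}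
    (h : ∀ E₁ E₂, MeasurableSet[m₁] E₁ → MeasurableSet[m₂] E₂ → ρ (E₁ ∩ E₂) ≤ μ E₁ + μ E₂)
    {w₁ w₂ : Ω → ℝ} (hw₁ : Measurable[m₁] w₁) (hw₂ : Measurable[m₂] w₂)
    (hw₁0 : 0 ≤ w₁) (hw₂0 : 0 ≤ w₂) (hw₁i : Integrable w₁ μ) (hw₂i : Integrable w₂ μ) :
    ∫ ω, min (w₁ ω) (w₂ ω) ∂ρ ≤ ∫ ω, w₁ ω ∂μ + ∫ ω, w₂ ω ∂μ := by
  have h₁ := integral_nonneg (μ := μ) hw₁0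
  have h₂ := integral_nonneg (μ := μ) hw₂0
  rw [integral_eq_lintegral_of_nonneg_ae (ae_of_all _ fun ω => le_min (hw₁0 ω) (hw₂0 ω))
    ((hw₁.mono hm₁ le_rfl).min (hw₂.mono hm₂ le_rfl)).aestronglyMeasurable]
  refine ENNReal.toReal_le_of_le_ofReal (add_nonneg h₁ h₂) ?_
  rw [ENNReal.ofReal_add h₁ h₂, ofReal_integral_eq_lintegral_ofReal hw₁i (ae_of_all _ hw₁0),
    ofReal_integral_eq_lintegral_ofReal hw₂i (ae_of_all _ hw₂0)]
  exact lintegral_ofReal_min_le_of_measure_inter_le hm₁ hm₂ h hw₁ hw₂ hw₁0 hw₂0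

theorem integral_min_eq_setIntegral_add_setIntegral_compl {ρ : Measure Ω} {f g : Ω → ℝ}
    (hf : Integrable f ρ) (hg : Integrable g ρ) (hfg : MeasurableSet {ω | f ω ≤ g ω}) :
    ∫ ω, min (f ω) (g ω) ∂ρ =
      ∫ ω in {ω | f ω ≤ g ω}, f ω ∂ρ + ∫ ω in {ω | f ω ≤ g ω}ᶜ, g ω ∂ρ := by
  rw [← integral_add_compl hfg (f := fun ω => min (f ω) (g ω)) (hf.inf hg),
    setIntegral_congr_fun hfg fun ω hω => min_eq_left hω,
    setIntegral_congr_fun hfg.compl fun ω (hω : ¬f ω ≤ g ω) => min_eq_right (le_of_not_ge hω)]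

section SumIndicator

variable {ι : Type*} [Fintype ι] {μ : Measure Ω} [IsFiniteMeasure μ] {A : ι → Set Ω}

theorem integrable_sum_indicator_const (hA : ∀ i, MeasurableSet (A i)) (c : ι → ℝ) :
    Integrable (fun ω => ∑ i, (A i).indicator (fun _ => c i) ω) μ :=
  integrable_finsetSum _ fun i _ => (integrable_const (c i)).indicator (hA i)

theorem integral_sum_indicator_const (hA : ∀ i, MeasurableSet (A i)) (c : ι → ℝ) :
    ∫ ω, ∑ i, (A i).indicator (fun _ => c i) ω ∂μ = ∑ i, μ.real (A i) * c i := by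
  rw [integral_finsetSum _ fun i _ => (integrable_const (c i)).indicator (hA i)]
  exact Finset.sum_congr rfl fun i _ => integral_indicator_const _ (hA i)

theorem integral_sum_indicator_div_le (hA : ∀ i, MeasurableSet (A i)) {w : ι → ℝ} (hw : 0 ≤ w) :
    ∫ ω, ∑ i, (A i).indicator (fun _ => w i / μ.real (A i)) ω ∂μ ≤ ∑ i, w i := by
  rw [integral_sum_indicator_const hA]
  refine Finset.sum_le_sum fun i _ => ?_
  rw [mul_div_left_comm]
  exact mul_le_of_le_one_right (hw i) (div_self_le_one _)

end SumIndicator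

theorem exists_mem_additiveMinorants_sum_le (hm₁ : m₁ ≤ m0) (hm₂ : m₂ ≤ m0)
    {μ ρ : Measure Ω} [IsFiniteMeasure μ] [IsFiniteMeasure ρ]
    (h : ∀ E₁ E₂, MeasurableSet[m₁] E₁ → MeasurableSet[m₂] E₂ → ρ (E₁ ∩ E₂) ≤ μ E₁ + μ E₂)
    {ι : Type*} [Fintype ι] {A B : ι → Set Ω} (hA : ∀ i, MeasurableSet[m₁] (A i))
    (hB : ∀ i, MeasurableSet[m₂] (B i)) {w : ι → ℝ} (hw : 0 ≤ w) :
    ∃ g ∈ additiveMinorants ρ, ∑ i, w i * (g (A i) / μ.real (A i) +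
      (ρ.real (B i) - g (B i)) / μ.real (B i)) ≤ ∑ i, w i * 2 := by
  have hA' i := hm₁ _ (hA i)
  have hB' i := hm₂ _ (hB i)
  set W₁ : Ω → ℝ := fun ω => ∑ i, (A i).indicator (fun _ => w i / μ.real (A i)) ω
  set W₂ : Ω → ℝ := fun ω => ∑ i, (B i).indicator (fun _ => w i / μ.real (B i)) ω
  have hW₁ : Measurable[m₁] W₁ :=
    Finset.measurable_sum _ fun i _ => measurable_const.indicator (hA i)
  have hW₂ : Measurable[m₂] W₂ :=
    Finset.measurable_sum _ fun i _ => measurable_const.indicator (hB i)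
  have hW0 : ∀ C : ι → Set Ω, 0 ≤ fun ω => ∑ i, (C i).indicator (fun _ => w i / μ.real (C i)) ω :=
    fun C ω => Finset.sum_nonneg fun i _ =>
      indicator_nonneg (fun _ _ => div_nonneg (hw i) measureReal_nonneg) ω
  set S : Set Ω := {ω | W₁ ω ≤ W₂ ω}
  have hS : MeasurableSet S := measurableSet_le (hW₁.mono hm₁ le_rfl) (hW₂.mono hm₂ le_rfl)
  refine ⟨fun s => ρ.real (s ∩ S), measureReal_inter_mem_additiveMinorants ρ hS, ?_⟩
  calc ∑ i, w i * (ρ.real (A i ∩ S) / μ.real (A i) +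
        (ρ.real (B i) - ρ.real (B i ∩ S)) / μ.real (B i))
      = ∫ ω in S, W₁ ω ∂ρ + ∫ ω in Sᶜ, W₂ ω ∂ρ := by
        rw [integral_sum_indicator_const hA', integral_sum_indicator_const hB',
          ← Finset.sum_add_distrib]
        refine Finset.sum_congr rfl fun i _ => ?_
        rw [measureReal_restrict_apply (hA' i), measureReal_restrict_apply (hB' i),
          ← measureReal_inter_add_sdiff (s := B i) hS, Set.sdiff_eq]
        ring
    _ = ∫ ω, min (W₁ ω) (W₂ ω) ∂ρ := (integral_min_eq_setIntegral_add_setIntegral_compl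
        (integrable_sum_indicator_const hA' _) (integrable_sum_indicator_const hB' _) hS).symm
    _ ≤ ∫ ω, W₁ ω ∂μ + ∫ ω, W₂ ω ∂μ :=
        integral_min_le_of_measure_inter_le hm₁ hm₂ h hW₁ hW₂ (hW0 A) (hW0 B)
          (integrable_sum_indicator_const hA' _) (integrable_sum_indicator_const hB' _)
    _ ≤ ∑ i, w i + ∑ i, w i :=
        add_le_add (integral_sum_indicator_div_le hA' hw) (integral_sum_indicator_div_le hB' hw)
    _ = ∑ i, w i * 2 := by simp only [← Finset.sum_add_distrib, mul_two]

theorem exists_mem_additiveMinorants_forall_div_add_div_le_two (hm₁ : m₁ ≤ m0) (hm₂ : m₂ ≤ m0)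
    {μ ρ : Measure Ω} [IsFiniteMeasure μ] [IsFiniteMeasure ρ]
    (h : ∀ E₁ E₂, MeasurableSet[m₁] E₁ → MeasurableSet[m₂] E₂ → ρ (E₁ ∩ E₂) ≤ μ E₁ + μ E₂) :
    ∃ g ∈ additiveMinorants ρ, ∀ A B, MeasurableSet[m₁] A → MeasurableSet[m₂] B →
      g A / μ.real A + (ρ.real B - g B) / μ.real B ≤ 2 := by
  let J := {p : Set Ω × Set Ω // MeasurableSet[m₁] p.1 ∧ MeasurableSet[m₂] p.2}
  -- the constraint for `(A, B)`, with its part independent of `g` moved to the right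
  let L : J → (Set Ω → ℝ) →L[ℝ] ℝ := fun p =>
    (μ.real p.1.1)⁻¹ • ContinuousLinearMap.proj p.1.1 -
      (μ.real p.1.2)⁻¹ • ContinuousLinearMap.proj p.1.2
  have hL : ∀ p g, L p g = g p.1.1 / μ.real p.1.1 - g p.1.2 / μ.real p.1.2 := fun p g => by
    simp [L, div_eq_inv_mul]
  obtain ⟨g, hg, hgL⟩ := (isCompact_additiveMinorants ρ).exists_mem_forall_le_of_forall_sum_mul_le
    (convex_additiveMinorants ρ) L (fun p => 2 - ρ.real p.1.2 / μ.real p.1.2) fun s w hw => by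
      obtain ⟨g, hg, hgw⟩ := exists_mem_additiveMinorants_sum_le hm₁ hm₂ h
        (A := fun p : s => p.1.1.1) (B := fun p => p.1.1.2) (fun p => p.1.2.1) (fun p => p.1.2.2) hw
      refine ⟨g, hg, ?_⟩
      have key : ∀ p : s, w p * L p g = w p * (g p.1.1.1 / μ.real p.1.1.1 +
          (ρ.real p.1.1.2 - g p.1.1.2) / μ.real p.1.1.2) - w p * 2 +
          w p * (2 - ρ.real p.1.1.2 / μ.real p.1.1.2) := fun p => by
        rw [hL]
        ring
      simp only [key, Finset.sum_add_distrib, Finset.sum_sub_distrib]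
      linarith
  refine ⟨g, hg, fun A B hA hB => ?_⟩
  have := hgL ⟨(A, B), hA, hB⟩
  rw [hL] at this
  dsimp only at this
  linarith [sub_div (ρ.real B) (g B) (μ.real B)]

theorem exists_le_forall_div_add_div_le_two (hm₁ : m₁ ≤ m0) (hm₂ : m₂ ≤ m0)
    {μ ρ : Measure Ω} [IsFiniteMeasure μ] [IsFiniteMeasure ρ]
    (h : ∀ E₁ E₂, MeasurableSet[m₁] E₁ → MeasurableSet[m₂] E₂ → ρ (E₁ ∩ E₂) ≤ μ E₁ + μ E₂) :
    ∃ ν ≤ ρ, ∀ A B, MeasurableSet[m₁] A → MeasurableSet[m₂] B → μ A ≠ 0 → μ B ≠ 0 →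
      ν A / μ A + (ρ B - ν B) / μ B ≤ 2 := by
  obtain ⟨g, hg, hgAB⟩ := exists_mem_additiveMinorants_forall_div_add_div_le_two hm₁ hm₂ h
  obtain ⟨ν, hνρ, hν⟩ := exists_measure_le_of_mem_additiveMinorants hg
  refine ⟨ν, hνρ, fun A B hA hB hμA hμB => ?_⟩
  have hμA' : 0 < μ.real A := ENNReal.toReal_pos hμA (measure_ne_top μ A)
  have hμB' : 0 < μ.real B := ENNReal.toReal_pos hμB (measure_ne_top μ B)
  rw [hν A (hm₁ _ hA), hν B (hm₂ _ hB), ← ofReal_measureReal (μ := ρ) (s := B),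
    ← ENNReal.ofReal_sub _ (hg.1 B).1, ← ofReal_measureReal (μ := μ) (s := A),
    ← ofReal_measureReal (μ := μ) (s := B), ← ENNReal.ofReal_div_of_pos hμA',
    ← ENNReal.ofReal_div_of_pos hμB', ← ENNReal.ofReal_add (div_nonneg (hg.1 A).1 hμA'.le)
      (div_nonneg (sub_nonneg.2 (hg.1 B).2) hμB'.le)]
  exact (ENNReal.ofReal_le_ofReal (hgAB A B hA hB)).trans_eq (ENNReal.ofReal_ofNat 2)

theorem withDensity_enorm_mul {μ : Measure Ω} {x c : Ω → ℝ} (hx : AEMeasurable x μ)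
    (hc : Measurable c) (hc0 : 0 ≤ c) :
    μ.withDensity (fun ω => ‖c ω * x ω‖ₑ) =
      (μ.withDensity fun ω => ‖x ω‖ₑ).withDensity fun ω => ENNReal.ofReal (c ω) := by
  rw [← withDensity_mul₀ hx.enorm hc.ennreal_ofReal.aemeasurable]
  congr 1
  funext ω
  rw [enorm_mul, Real.enorm_of_nonneg (hc0 ω), Pi.mul_apply, mul_comm]

theorem exists_add_eq_and_withDensity_eq {μ ν : Measure Ω} {x : Ω → ℝ} (hx : Integrable x μ)
    (hν : ν ≤ μ.withDensity fun ω => ‖x ω‖ₑ) :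
    ∃ x₁ x₂ : Ω → ℝ, Integrable x₁ μ ∧ Integrable x₂ μ ∧ x = x₁ + x₂ ∧
      μ.withDensity (fun ω => ‖x₁ ω‖ₑ) = ν ∧
      μ.withDensity (fun ω => ‖x₂ ω‖ₑ) = μ.withDensity (fun ω => ‖x ω‖ₑ) - ν := by
  set ρ := μ.withDensity fun ω => ‖x ω‖ₑ
  have : IsFiniteMeasure ρ := isFiniteMeasure_withDensity hx.2.ne
  have : IsFiniteMeasure ν := isFiniteMeasure_of_le ρ hν
  -- `x₁ = θ x` with `θ = dν/dρ`, truncated at `1` on a `ρ`-null set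
  set θ : Ω → ℝ := fun ω => min 1 (ν.rnDeriv ρ ω).toReal
  have hθ : Measurable θ := measurable_const.min (Measure.measurable_rnDeriv ν ρ).ennreal_toReal
  have hθ01 : ∀ ω, θ ω ∈ Icc 0 1 := fun ω => ⟨le_min zero_le_one toReal_nonneg, min_le_left _ _⟩
  have hθ'01 : ∀ ω, 1 - θ ω ∈ Icc 0 1 := fun ω => Icc.mem_iff_one_sub_mem.1 (hθ01 ω)
  have hint : ∀ {c : Ω → ℝ}, Measurable c → (∀ ω, c ω ∈ Icc 0 1) →
      Integrable (fun ω => c ω * x ω) μ := fun hc hc01 =>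
    hx.bdd_mul hc.aestronglyMeasurable
      (ae_of_all _ fun ω => (Real.norm_of_nonneg (hc01 ω).1).trans_le (hc01 ω).2)
  have h₁ : μ.withDensity (fun ω => ‖θ ω * x ω‖ₑ) = ν := by
    rw [withDensity_enorm_mul hx.aemeasurable hθ fun ω => (hθ01 ω).1]
    conv_rhs => rw [← Measure.withDensity_rnDeriv_eq ν ρ (Measure.absolutelyContinuous_of_le hν)]
    refine withDensity_congr_ae ?_
    filter_upwards [Measure.rnDeriv_le_one_of_le hν, Measure.rnDeriv_lt_top ν ρ] with ω h1 htop
    simp only [θ]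
    rw [min_eq_right (ENNReal.toReal_le_of_le_ofReal zero_le_one (by simpa using h1)),
      ofReal_toReal htop.ne]
  refine ⟨_, _, hint hθ hθ01, hint (hθ.const_sub 1) hθ'01,
    funext fun ω => by simp only [Pi.add_apply]; ring, h₁, ?_⟩
  have hsum : (μ.withDensity fun ω => ‖(1 - θ ω) * x ω‖ₑ) + ν = ρ := by
    rw [← h₁, withDensity_enorm_mul hx.aemeasurable (hθ.const_sub 1) fun ω => (hθ'01 ω).1,
      withDensity_enorm_mul hx.aemeasurable hθ fun ω => (hθ01 ω).1,
      ← withDensity_add_left (hθ.const_sub 1).ennreal_ofReal]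
    conv_rhs => rw [← withDensity_one (μ := ρ)]
    congr 1
    funext ω
    rw [Pi.add_apply, ← ENNReal.ofReal_add (hθ'01 ω).1 (hθ01 ω).1, sub_add_cancel,
      ENNReal.ofReal_one, Pi.one_apply]
  rw [← hsum, Measure.add_sub_cancel]

theorem condExp_ae_le_const_of_forall_setIntegral_le (hm : m ≤ m0) {μ : Measure Ω}
    [IsFiniteMeasure μ] {y : Ω → ℝ} (hy : Integrable y μ) {c : ℝ}
    (h : ∀ A, MeasurableSet[m] A → ∫ ω in A, y ω ∂μ ≤ c * μ.real A) :
    μ[y|m] ≤ᵐ[μ] fun _ => c := by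
  have : IsFiniteMeasure (μ.trim hm) := isFiniteMeasure_trim hm
  refine ae_of_ae_trim hm (ae_le_of_forall_setIntegral_le
    (integrable_condExp.trim hm stronglyMeasurable_condExp) (integrable_const c)
    fun A hA _ => ?_)
  rw [← setIntegral_trim hm stronglyMeasurable_condExp hA,
    ← setIntegral_trim hm stronglyMeasurable_const hA, setIntegral_condExp hm hy hA,
    setIntegral_const, smul_eq_mul, mul_comm]
  exact h A hA

end MeasureTheory

theorem condLinftyNorm_le_iSup_setLIntegral_div {Ω : Type*} {m m0 : MeasurableSpace Ω}
    (hm : m ≤ m0) {μ : Measure Ω} [IsFiniteMeasure μ] {y : Ω → ℝ} (hy : Integrable y μ) :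
    condLinftyNorm μ m y ≤ ⨆ (A) (_ : MeasurableSet[m] A ∧ μ A ≠ 0),
      (∫⁻ ω in A, ‖y ω‖ₑ ∂μ) / μ A := by
  set c := ⨆ (A) (_ : MeasurableSet[m] A ∧ μ A ≠ 0), (∫⁻ ω in A, ‖y ω‖ₑ ∂μ) / μ A
  rcases eq_top_or_lt_top c with hc | hc
  · rw [hc]
    exact le_top
  have havg : ∀ A, MeasurableSet[m] A → ∫ ω in A, |y ω| ∂μ ≤ c.toReal * μ.real A := by
    intro A hA
    by_cases hμA : μ A = 0
    · rw [Measure.restrict_eq_zero.2 hμA, integral_zero_measure]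
      positivity
    have hle : ∫⁻ ω in A, ‖y ω‖ₑ ∂μ ≤ c * μ A := (ENNReal.div_le_iff hμA (measure_ne_top μ A)).1
      (le_iSup₂ (f := fun A (_ : MeasurableSet[m] A ∧ μ A ≠ 0) => (∫⁻ ω in A, ‖y ω‖ₑ ∂μ) / μ A)
        A ⟨hA, hμA⟩)
    have := integral_norm_eq_lintegral_enorm (μ := μ.restrict A) hy.aestronglyMeasurable.restrict
    simp only [Real.norm_eq_abs] at this
    rw [this, measureReal_def, ← ENNReal.toReal_mul]
    exact ENNReal.toReal_mono (ENNReal.mul_ne_top hc.ne (measure_ne_top μ A)) hle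
  refine essSup_le_of_ae_le _
    ((condExp_ae_le_const_of_forall_setIntegral_le hm hy.abs havg).mono fun ω hω => ?_)
  exact (ENNReal.ofReal_le_ofReal hω).trans_eq (ENNReal.ofReal_toReal hc.ne)

/-- Conditional expectation version of the Varopoulos lemma, converse with constant 2:
if `∫_{E₁∩E₂} |x| dμ ≤ μ(E₁) + μ(E₂)` for all `ℬⱼ`-measurable sets `Eⱼ`, then there is a
decomposition `x = x₁ + x₂` a.e. with `‖x₁‖_{C₁} + ‖x₂‖_{C₂} ≤ 2`. -/
theorem condexp_varopoulos_converse
    {Ω : Type*} [m0 : MeasurableSpace Ω] (μ : Measure Ω) [IsProbabilityMeasure μ]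
    (m₁ m₂ : MeasurableSpace Ω) (hm₁ : m₁ ≤ m0) (hm₂ : m₂ ≤ m0)
    (x : Ω → ℝ) (hx : Integrable x μ)
    (hbound : ∀ E₁ E₂ : Set Ω, MeasurableSet[m₁] E₁ → MeasurableSet[m₂] E₂ →
      ∫⁻ ω in E₁ ∩ E₂, ‖x ω‖₊ ∂μ ≤ μ E₁ + μ E₂) :
    ∃ x₁ x₂ : Ω → ℝ, Integrable x₁ μ ∧ Integrable x₂ μ ∧
      x =ᵐ[μ] x₁ + x₂ ∧
      condLinftyNorm (m0 := m0) μ m₁ x₁ + condLinftyNorm (m0 := m0) μ m₂ x₂ ≤ 2 := by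
  set ρ := μ.withDensity fun ω => ‖x ω‖ₑ
  have : IsFiniteMeasure ρ := isFiniteMeasure_withDensity hx.2.ne
  obtain ⟨ν, hνρ, hν⟩ := exists_le_forall_div_add_div_le_two hm₁ hm₂ (μ := μ) (ρ := ρ)
    fun E₁ E₂ h₁ h₂ => by
      rw [withDensity_apply _ ((hm₁ _ h₁).inter (hm₂ _ h₂))]
      exact hbound E₁ E₂ h₁ h₂
  have : IsFiniteMeasure ν := isFiniteMeasure_of_le ρ hνρ
  obtain ⟨x₁, x₂, hx₁, hx₂, hsum, h₁, h₂⟩ := exists_add_eq_and_withDensity_eq hx hνρ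
  refine ⟨x₁, x₂, hx₁, hx₂, .of_forall (congrFun hsum), ?_⟩
  calc _
      ≤ (⨆ (A) (_ : MeasurableSet[m₁] A ∧ μ A ≠ 0), ν A / μ A) +
          ⨆ (B) (_ : MeasurableSet[m₂] B ∧ μ B ≠ 0), (ρ B - ν B) / μ B := by
        gcongr
        · refine (condLinftyNorm_le_iSup_setLIntegral_div hm₁ hx₁).trans_eq
            (biSup_congr fun A hA => ?_)
          rw [← withDensity_apply _ (hm₁ _ hA.1), h₁]
        · refine (condLinftyNorm_le_iSup_setLIntegral_div hm₂ hx₂).trans_eq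
            (biSup_congr fun B hB => ?_)
          rw [← withDensity_apply _ (hm₂ _ hB.1), h₂, Measure.sub_apply (hm₂ _ hB.1) hνρ]
    _ ≤ 2 := biSup_add_biSup_le' ⟨univ, .univ, by simp⟩ ⟨univ, .univ, by simp⟩
        fun A hA B hB => hν A B hA.1 hB.1 hA.2 hB.2
end

section
/- (Multiplication operator description of the conditional L_∞ norm.) Let (Ω, 𝒜, μ) be a probability space, ℬ ⊆ 𝒜 a sub-σ-algebra, 𝔼_ℬ the conditional expectation with respect to ℬ, and x : Ω → ℝ integrable. Then the essential supremum of 𝔼_ℬ(|x|) equals the operator norm of the multiplication operator M_x : L_1(ℬ, μ) → L_1(𝒜, μ), g ↦ x·g; that is, ess sup 𝔼_ℬ(|x|) = sup{ ∫ |x·g| dμ : g is ℬ-measurable and ∫ |g| dμ ≤ 1 }. -/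
/-!
Replace the Bochner conditional expectation `μ[|x| | ℬ]` by the Lebesgue one `F = μ⁻[|x| | ℬ]`
(they agree a.e.). The measures `|x| • μ` and `F • μ` agree on `ℬ`, so `∫ |x g| dμ = ∫ F |g| dμ`
for every `ℬ`-measurable `g`. The claim becomes `L¹`–`L^∞` duality for the `ℬ`-measurable `F`:
Hölder gives `∫ F |g| ≤ ess sup F · ∫ |g|`, and for `a < ess sup F` the normalized indicator of
the `ℬ`-measurable set `{a < F}`, which has positive measure, attains at least `a`.
-/

open MeasureTheory
open scoped ENNReal

namespace MeasureTheory

variable {Ω : Type*} {m m0 : MeasurableSpace Ω} {μ : Measure Ω}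

theorem lintegral_condLExp_mul (hm : m ≤ m0) [SigmaFinite (μ.trim hm)] {X : Ω → ℝ≥0∞}
    (hX : AEMeasurable X μ) {g : Ω → ℝ≥0∞} (hg : Measurable[m] g) :
    ∫⁻ ω, μ⁻[X|m] ω * g ω ∂μ = ∫⁻ ω, X ω * g ω ∂μ := by
  have h_trim : (μ.withDensity μ⁻[X|m]).trim hm = (μ.withDensity X).trim hm := by
    refine @Measure.ext _ m _ _ fun s hs => ?_
    rw [trim_measurableSet_eq hm hs, trim_measurableSet_eq hm hs, withDensity_apply _ (hm s hs),
      withDensity_apply _ (hm s hs), setLIntegral_condLExp hm _ _ hs]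
  calc ∫⁻ ω, μ⁻[X|m] ω * g ω ∂μ = ∫⁻ ω, g ω ∂(μ.withDensity μ⁻[X|m]).trim hm := by
        rw [lintegral_trim hm hg, lintegral_withDensity_eq_lintegral_mul _
          (measurable_condLExp' m μ X) (hg.mono hm le_rfl)]
        rfl
    _ = ∫⁻ ω, X ω * g ω ∂μ := by
        rw [h_trim, lintegral_trim hm hg,
          lintegral_withDensity_eq_lintegral_mul₀ hX (hg.mono hm le_rfl).aemeasurable]
        rfl

theorem lintegral_mul_le_essSup_mul_lintegral {F G : Ω → ℝ≥0∞} (hG : AEMeasurable G μ) :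
    ∫⁻ ω, F ω * G ω ∂μ ≤ essSup F μ * ∫⁻ ω, G ω ∂μ :=
  calc ∫⁻ ω, F ω * G ω ∂μ ≤ ∫⁻ ω, essSup F μ * G ω ∂μ := by
        refine lintegral_mono_ae ?_
        filter_upwards [ENNReal.ae_le_essSup F] with ω hω
        gcongr
    _ = essSup F μ * ∫⁻ ω, G ω ∂μ := lintegral_const_mul'' _ hG

theorem exists_lintegral_mul_ge_of_lt_essSup (hm : m ≤ m0) [IsFiniteMeasure μ] {F : Ω → ℝ≥0∞}
    (hF : Measurable[m] F) {a : ℝ≥0∞} (ha : a < essSup F μ) :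
    ∃ g : Ω → ℝ, Measurable[m] g ∧ ∫⁻ ω, ‖g ω‖ₑ ∂μ = 1 ∧ a ≤ ∫⁻ ω, F ω * ‖g ω‖ₑ ∂μ := by
  set S := {ω | a < F ω}
  have hS : MeasurableSet[m] S := hF measurableSet_Ioi
  have hμS : μ S ≠ 0 := fun h => ha.not_ge <| essSup_le_of_ae_le a <|
    (measure_eq_zero_iff_ae_notMem.mp h).mono fun _ hω => not_lt.mp hω
  have hμS_inv : (μ S)⁻¹ * μ S = 1 := ENNReal.inv_mul_cancel hμS (measure_ne_top μ S)
  have h_enorm : ∀ ω, ‖S.indicator (fun _ => ((μ S)⁻¹).toReal) ω‖ₑ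
      = S.indicator (fun _ => (μ S)⁻¹) ω := fun ω => by
    rw [enorm_indicator_eq_indicator_enorm, Real.enorm_toReal (ENNReal.inv_ne_top.mpr hμS)]
  refine ⟨S.indicator fun _ => ((μ S)⁻¹).toReal, measurable_const.indicator hS, ?_, ?_⟩
  · simp only [h_enorm, lintegral_indicator_const (hm S hS), hμS_inv]
  · calc a = ∫⁻ _ in S, a * (μ S)⁻¹ ∂μ := by
          rw [setLIntegral_const, mul_assoc, hμS_inv, mul_one]
      _ ≤ ∫⁻ ω in S, F ω * (μ S)⁻¹ ∂μ :=
          setLIntegral_mono' (hm S hS) fun ω hω => by gcongr; exact le_of_lt hω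
      _ = ∫⁻ ω, F ω * ‖S.indicator (fun _ => ((μ S)⁻¹).toReal) ω‖ₑ ∂μ := by
          simp only [h_enorm, ← lintegral_indicator (hm S hS), Set.indicator_mul_right]

theorem essSup_eq_iSup_lintegral_mul_enorm (hm : m ≤ m0) [IsFiniteMeasure μ] {F : Ω → ℝ≥0∞}
    (hF : Measurable[m] F) :
    essSup F μ = ⨆ (g : Ω → ℝ) (_ : Measurable[m] g) (_ : ∫⁻ ω, ‖g ω‖ₑ ∂μ ≤ 1),
      ∫⁻ ω, F ω * ‖g ω‖ₑ ∂μ := by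
  refine le_antisymm (le_of_forall_lt_imp_le_of_dense fun a ha => ?_)
    (iSup₂_le fun g hg => iSup_le fun hg_norm => ?_)
  · obtain ⟨g, hg, hg_norm, hag⟩ := exists_lintegral_mul_ge_of_lt_essSup hm hF ha
    exact hag.trans (le_iSup₂_of_le g hg (le_iSup_of_le hg_norm.le le_rfl))
  · calc ∫⁻ ω, F ω * ‖g ω‖ₑ ∂μ ≤ essSup F μ * ∫⁻ ω, ‖g ω‖ₑ ∂μ :=
          lintegral_mul_le_essSup_mul_lintegral (hg.mono hm le_rfl).enorm.aemeasurable
      _ ≤ essSup F μ := mul_le_of_le_one_right' hg_norm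

end MeasureTheory

/-- Multiplication operator description of the conditional `L_∞` norm:
`ess sup 𝔼_ℬ(|x|)` equals the norm of the multiplication operator
`M_x : L_1(ℬ,μ) → L_1(𝒜,μ)`, i.e. the supremum of `∫ |x·g| dμ` over `ℬ`-measurable `g` with
`∫ |g| dμ ≤ 1`. -/
theorem condexp_essSup_eq_multiplication_norm
    {Ω : Type*} [m0 : MeasurableSpace Ω] (μ : Measure Ω) [IsProbabilityMeasure μ]
    (m : MeasurableSpace Ω) (hm : m ≤ m0)
    (x : Ω → ℝ) (hx : Integrable x μ) :
    essSup (fun ω => ENNReal.ofReal ((μ[fun ω' => |x ω'| | m]) ω)) μ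
      = ⨆ (g : Ω → ℝ) (_ : Measurable[m] g) (_ : (∫⁻ ω, ‖g ω‖₊ ∂μ) ≤ 1),
          ∫⁻ ω, ‖x ω * g ω‖₊ ∂μ := by
  rw [← essSup_congr_ae (condLExp_ofReal m hx.abs (ae_of_all _ fun _ => abs_nonneg _)),
    essSup_eq_iSup_lintegral_mul_enorm hm (measurable_condLExp m μ _)]
  refine iSup_congr fun g => iSup_congr fun hg => iSup_congr fun _ => ?_
  rw [lintegral_condLExp_mul hm hx.abs.aemeasurable.ennreal_ofReal hg.enorm]
  simp only [nnnorm_mul, ENNReal.coe_mul, ← enorm_eq_nnnorm, Real.enorm_eq_ofReal_abs]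
end
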